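/- arXiv:2302.07312 — 8 statements merged into one kernel-verified Lean document; each statement's English description precedes it below -/
import Mathlib

section
/- Let a, b, c be real numbers with c > 1. Then there exists a real number x with x = a + min(0, b + c·x) if and only if b + c·a ≥ 0. -/
/-- For real numbers `a`, `b`, `c` with `c > 1`, the equation `x = a + min 0 (b + c*x)`
has a real solution if and only if `b + c*a ≥ 0`. -/
theorem stmt_0 (a b c : ℝ) (hc : 1 < c) :
    (∃ x : ℝ, x = a + min 0 (b + c * x)) ↔ 0 ≤ b + c * a := by
  constructor
  · rintro ⟨x, hx⟩
    rcases le_or_gt 0 (b + c * x) with h | h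
    · rw [min_eq_left h] at hx
      have : x = a := by linarith
      subst this; exact h
    · rw [min_eq_right h.le] at hx
      nlinarith [mul_pos (show (0:ℝ) < c - 1 by linarith) (show (0:ℝ) < -(b + c * x) by linarith)]
  · intro h
    exact ⟨a, by rw [min_eq_left h]; ring⟩
end

section
/- Let n ≥ 1 and, for each i ∈ {1,…,n}, let c_i > 0, p_i ≥ 1 and α_i ∈ ℝ satisfy ∏_{i=1}^n p_i > 1 and ∑_{i=1}^n α_i ≤ n. Then there do not exist differentiable functions x_1,…,x_n : [1,∞) → (0,∞) such that x_i'(t) ≥ c_i · t^{−α_i} · x_{i−1}(t)^{p_i} for all t ≥ 1 and all i, where indices are taken cyclically (x_0 := x_n) and the exponentiation is the real power of a positive real. -/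
/-!
Choose weights `θ_i > 0` with `∑ θ_i = 1` and `p_i θ_i = Q θ_{i-1}`, where `Q = (∏ p_i)^{1/n} > 1`.
By Jensen's inequality `y = ∑ θ_i log x_i` satisfies `y' ≥ C t^{-σ} exp ((Q - 1) y)` with
`σ = ∑ θ_i α_i`. For `σ ≤ 1` this Osgood-type inequality has no solution on `[1, ∞)`. For `σ > 1`
it only forces `y ≤ L + K log t` with `K = (σ - 1) / (Q - 1)`, and this is contradicted by lower
bounds `x_i ≳ t^{r_i}`: integrating the system once sends the exponents `r` to
`max 0 (p_i r_{i-1} + 1 - α_i)`. Since `∑ α_i ≤ n`, iterating from `r = 0` either pushes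
`∑ θ_i r_i` beyond `K`, or the exponents freeze at an exact solution of
`r_i = p_i r_{i-1} + 1 - α_i` vanishing at some `j - 1` with `p_j > 1`. In the second case
`∑ θ_i r_i = K`, and `x_{j-1} ≳ log t` adds `θ_{j-1} log log t` to the lower bound for `y`.
-/

open Real Filter Finset

theorem sub_le_sub_of_hasDerivWithinAt_Ici {f f' g g' : ℝ → ℝ} {t₀ a b : ℝ} (ha : t₀ ≤ a)
    (hab : a ≤ b) (hf : ∀ t, t₀ ≤ t → HasDerivWithinAt f (f' t) (Set.Ici t₀) t)
    (hg : ∀ t, t₀ ≤ t → HasDerivWithinAt g (g' t) (Set.Ici t₀) t)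
    (hle : ∀ t ∈ Set.Icc a b, g' t ≤ f' t) : g b - g a ≤ f b - f a := by
  have hsub : Set.Icc a b ⊆ Set.Ici t₀ := fun t ht => ha.trans ht.1
  have hderiv : ∀ t ∈ Set.Icc a b,
      HasDerivWithinAt (fun s => f s - g s) (f' t - g' t) (Set.Icc a b) t :=
    fun t ht => ((hf t (hsub ht)).sub (hg t (hsub ht))).mono hsub
  have hmono : MonotoneOn (fun s => f s - g s) (Set.Icc a b) :=
    monotoneOn_of_hasDerivWithinAt_nonneg (convex_Icc a b)
      (fun t ht => (hderiv t ht).continuousWithinAt)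
      (fun t ht => (hderiv t (interior_subset ht)).mono interior_subset)
      (fun t ht => sub_nonneg.2 (hle t (interior_subset ht)))
  have := hmono (Set.left_mem_Icc.2 hab) (Set.right_mem_Icc.2 hab) hab
  linarith

section Osgood

variable {y y' : ℝ → ℝ} {C ρ σ : ℝ}

theorem mul_sub_le_exp_neg_sub_exp_neg {G g : ℝ → ℝ} {a b : ℝ} (hρ : 0 ≤ ρ) (ha : 1 ≤ a)
    (hab : a ≤ b) (hy : ∀ t, 1 ≤ t → HasDerivWithinAt y (y' t) (Set.Ici 1) t)
    (hG : ∀ t, 1 ≤ t → HasDerivAt G (g t) t)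
    (hgy : ∀ t, 1 ≤ t → g t * exp (ρ * y t) ≤ y' t) :
    ρ * G b - ρ * G a ≤ exp (-(ρ * y a)) - exp (-(ρ * y b)) := by
  have hcmp := sub_le_sub_of_hasDerivWithinAt_Ici ha hab
    (f := fun t => -exp (-(ρ * y t))) (f' := fun t => ρ * y' t * exp (-(ρ * y t)))
    (fun t ht => by
      refine (((hy t ht).const_mul ρ).neg.exp).neg.congr_deriv ?_
      simp only [Pi.neg_apply]
      ring)
    (fun t ht => ((hG t ht).const_mul ρ).hasDerivWithinAt)
    (fun t ht => by
      have hg : g t ≤ y' t * exp (-(ρ * y t)) := by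
        rw [exp_neg, ← div_eq_mul_inv, le_div_iff₀ (exp_pos _)]
        exact hgy t (ha.trans ht.1)
      nlinarith)
  linarith

/-- The Osgood-type blow-up: `exp (-ρ y) + ρ C log t` is nonincreasing but unbounded. -/
theorem false_of_exp_le_deriv_of_le_one (hC : 0 < C) (hρ : 0 < ρ) (hσ : σ ≤ 1)
    (hy : ∀ t, 1 ≤ t → HasDerivWithinAt y (y' t) (Set.Ici 1) t)
    (hyy : ∀ t, 1 ≤ t → C * t ^ (-σ) * exp (ρ * y t) ≤ y' t) : False := by
  have hgy : ∀ t, 1 ≤ t → C * t⁻¹ * exp (ρ * y t) ≤ y' t := fun t ht => by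
    refine le_trans ?_ (hyy t ht)
    gcongr
    rw [← rpow_neg_one]
    exact rpow_le_rpow_of_exponent_le ht (by linarith)
  obtain ⟨b, hb, hb1⟩ := (((tendsto_log_atTop.const_mul_atTop (mul_pos hρ hC)).eventually_ge_atTop
    (exp (-(ρ * y 1)))).and (eventually_ge_atTop 1)).exists
  have := mul_sub_le_exp_neg_sub_exp_neg hρ.le le_rfl hb1 hy
    (fun t ht => (hasDerivAt_log (by positivity)).const_mul C) hgy
  rw [log_one, mul_zero, mul_zero, sub_zero] at this
  linarith [exp_pos (-(ρ * y b))]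

theorem le_add_mul_log_of_exp_le_deriv (hC : 0 < C) (hρ : 0 < ρ) (hσ : 1 < σ)
    (hy : ∀ t, 1 ≤ t → HasDerivWithinAt y (y' t) (Set.Ici 1) t)
    (hyy : ∀ t, 1 ≤ t → C * t ^ (-σ) * exp (ρ * y t) ≤ y' t) :
    ∃ L, ∀ t, 1 ≤ t → y t ≤ L + (σ - 1) / ρ * log t := by
  have hσ1 : 0 < σ - 1 := sub_pos.2 hσ
  set D := C / (σ - 1) with hD
  have hG : ∀ t, 1 ≤ t → HasDerivAt (fun s => -D * s ^ (1 - σ)) (C * t ^ (-σ)) t := by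
    intro t ht
    refine ((hasDerivAt_rpow_const (p := 1 - σ) (Or.inl (by positivity))).const_mul
      (-D)).congr_deriv ?_
    rw [show 1 - σ - 1 = -σ by ring, hD]
    field_simp
    ring
  refine ⟨-log (ρ * D) / ρ, fun a ha => ?_⟩
  have ha0 : 0 < a := by linarith
  have hlim : Tendsto (fun b => ρ * (-D * b ^ (1 - σ)) - ρ * (-D * a ^ (1 - σ))) atTop
      (nhds (ρ * (-D * 0) - ρ * (-D * a ^ (1 - σ)))) := by
    have := tendsto_rpow_neg_atTop hσ1
    rw [neg_sub] at this
    exact ((this.const_mul (-D)).const_mul ρ).sub_const _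
  have hle : ρ * D * a ^ (1 - σ) ≤ exp (-(ρ * y a)) := by
    have := le_of_tendsto hlim (eventually_atTop.2 ⟨a, fun b hb =>
      (mul_sub_le_exp_neg_sub_exp_neg hρ.le ha hb hy hG hyy).trans
        (sub_le_self _ (exp_pos _).le)⟩)
    linarith
  have hlog := log_le_log (by positivity) hle
  rw [log_exp, log_mul (by positivity) (by positivity), log_rpow ha0] at hlog
  rw [div_mul_eq_mul_div, ← add_div, le_div_iff₀ hρ]
  linarith

end Osgood

def GrowsAtLeast (u f : ℝ → ℝ) : Prop := ∃ A > 0, ∀ᶠ t in atTop, A * f t ≤ u t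

namespace GrowsAtLeast

variable {u v v' f : ℝ → ℝ}

theorem of_const_mul {K : ℝ} (hK : 0 < K) (h : GrowsAtLeast u fun t => K * f t) :
    GrowsAtLeast u f := by
  obtain ⟨A, hA, h⟩ := h
  exact ⟨A * K, mul_pos hA hK, h.mono fun t ht => by linarith⟩

theorem eventually_log_le (h : GrowsAtLeast u f) (hf : ∀ᶠ t in atTop, 0 < f t) :
    ∃ E, ∀ᶠ t in atTop, E + log (f t) ≤ log (u t) := by
  obtain ⟨A, hA, h⟩ := h
  refine ⟨log A, (h.and hf).mono fun t ⟨ht, hft⟩ => ?_⟩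
  rw [← log_mul hA.ne' hft.ne']
  exact log_le_log (mul_pos hA hft) ht

theorem of_le_deriv {G g : ℝ → ℝ} (hv : ∀ t, 1 ≤ t → HasDerivWithinAt v (v' t) (Set.Ici 1) t)
    (hvpos : ∀ t, 1 ≤ t → 0 < v t) (hG : ∀ t, 1 ≤ t → HasDerivAt G (g t) t)
    (hGtop : Tendsto G atTop atTop) (hgv : ∀ᶠ t in atTop, g t ≤ v' t) : GrowsAtLeast v G := by
  obtain ⟨T, hT⟩ := eventually_atTop.1 hgv
  set T₁ := max T 1
  refine ⟨1 / 2, one_half_pos, ?_⟩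
  filter_upwards [eventually_ge_atTop T₁, hGtop.eventually_ge_atTop (2 * G T₁)] with t ht hGt
  have := sub_le_sub_of_hasDerivWithinAt_Ici (le_max_right T 1) ht hv
    (fun s hs => (hG s hs).hasDerivWithinAt) (fun s hs => hT s ((le_max_left T 1).trans hs.1))
  linarith [hvpos T₁ (le_max_right T 1)]

theorem eventually_le_deriv {A a c p α : ℝ} (hA : 0 < A) (hc : 0 ≤ c) (hp : 0 ≤ p)
    (hu : ∀ᶠ t in atTop, A * t ^ a ≤ u t) (huv : ∀ t, 1 ≤ t → c * t ^ (-α) * u t ^ p ≤ v' t) :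
    ∀ᶠ t in atTop, c * A ^ p * t ^ (p * a - α) ≤ v' t := by
  filter_upwards [hu, eventually_ge_atTop 1] with t ht ht1
  have ht0 : 0 < t := by linarith
  calc c * A ^ p * t ^ (p * a - α) = c * t ^ (-α) * (A * t ^ a) ^ p := by
        rw [mul_rpow hA.le (by positivity), ← rpow_mul ht0.le, sub_eq_add_neg, rpow_add ht0]
        ring_nf
    _ ≤ c * t ^ (-α) * u t ^ p := by gcongr
    _ ≤ v' t := huv t ht1

theorem rpow_of_deriv {a c p α : ℝ} (hu : GrowsAtLeast u (· ^ a)) (hc : 0 < c) (hp : 0 ≤ p)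
    (hb : 0 < p * a + 1 - α) (hv : ∀ t, 1 ≤ t → HasDerivWithinAt v (v' t) (Set.Ici 1) t)
    (hvpos : ∀ t, 1 ≤ t → 0 < v t) (huv : ∀ t, 1 ≤ t → c * t ^ (-α) * u t ^ p ≤ v' t) :
    GrowsAtLeast v (· ^ (p * a + 1 - α)) := by
  obtain ⟨A, hA, hu⟩ := hu
  have hB : 0 < c * A ^ p / (p * a + 1 - α) := by positivity
  refine of_const_mul hB (of_le_deriv hv hvpos (fun t ht => ?_)
    ((tendsto_rpow_atTop hb).const_mul_atTop hB) (eventually_le_deriv hA hc.le hp hu huv))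
  refine ((hasDerivAt_rpow_const (Or.inl (by positivity))).const_mul _).congr_deriv ?_
  rw [show p * a + 1 - α - 1 = p * a - α by ring]
  field_simp

theorem log_of_deriv {a c p α : ℝ} (hu : GrowsAtLeast u (· ^ a)) (hc : 0 < c) (hp : 0 ≤ p)
    (hcrit : p * a + 1 - α = 0) (hv : ∀ t, 1 ≤ t → HasDerivWithinAt v (v' t) (Set.Ici 1) t)
    (hvpos : ∀ t, 1 ≤ t → 0 < v t) (huv : ∀ t, 1 ≤ t → c * t ^ (-α) * u t ^ p ≤ v' t) :
    GrowsAtLeast v log := by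
  obtain ⟨A, hA, hu⟩ := hu
  have hB : 0 < c * A ^ p := by positivity
  refine of_const_mul hB (of_le_deriv hv hvpos (fun t ht => ?_)
    (tendsto_log_atTop.const_mul_atTop hB) (eventually_le_deriv hA hc.le hp hu huv))
  rw [show p * a - α = -1 by linarith, rpow_neg_one]
  exact (hasDerivAt_log (by positivity)).const_mul _

end GrowsAtLeast

theorem exp_sum_mul_log_le {ι : Type*} (s : Finset ι) {w z : ι → ℝ} (hw : ∀ i ∈ s, 0 ≤ w i)
    (hw1 : ∑ i ∈ s, w i = 1) (hz : ∀ i ∈ s, 0 < z i) :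
    exp (∑ i ∈ s, w i * log (z i)) ≤ ∑ i ∈ s, w i * z i := by
  calc exp (∑ i ∈ s, w i * log (z i)) = ∏ i ∈ s, z i ^ w i := by
        rw [exp_sum]
        exact prod_congr rfl fun i hi => by rw [rpow_def_of_pos (hz i hi), mul_comm]
    _ ≤ _ := geom_mean_le_arith_mean_weighted s w z hw hw1 fun i hi => (hz i hi).le

section WeightedLog

variable {ι : Type*} [Fintype ι] {x f : ι → ℝ → ℝ} {θ : ι → ℝ} {L K : ℝ}

theorem eventually_sum_mul_log_le (hθ : ∀ i, 0 ≤ θ i) (hx : ∀ i, GrowsAtLeast (x i) (f i))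
    (hf : ∀ i, ∀ᶠ t in atTop, 0 < f i t) :
    ∃ E, ∀ᶠ t in atTop, E + ∑ i, θ i * log (f i t) ≤ ∑ i, θ i * log (x i t) := by
  choose E hE using fun i => (hx i).eventually_log_le (hf i)
  refine ⟨∑ i, θ i * E i, (eventually_all.2 hE).mono fun t ht => ?_⟩
  rw [← sum_add_distrib]
  exact sum_le_sum fun i _ => by rw [← mul_add]; exact mul_le_mul_of_nonneg_left (ht i) (hθ i)

theorem false_of_sum_mul_log_le (hθ : ∀ i, 0 ≤ θ i) (hx : ∀ i, GrowsAtLeast (x i) (f i))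
    (hf : ∀ i, ∀ᶠ t in atTop, 0 < f i t)
    (hL : ∀ t, 1 ≤ t → ∑ i, θ i * log (x i t) ≤ L + K * log t)
    (htop : Tendsto (fun t => ∑ i, θ i * log (f i t) - K * log t) atTop atTop) : False := by
  obtain ⟨E, hE⟩ := eventually_sum_mul_log_le hθ hx hf
  obtain ⟨t, hEt, ht, ht1⟩ :=
    (hE.and ((htop.eventually_gt_atTop (L - E)).and (eventually_ge_atTop 1))).exists
  linarith [hL t ht1]

theorem false_of_growsAtLeast_rpow {r : ι → ℝ} (hθ : ∀ i, 0 ≤ θ i)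
    (hx : ∀ i, GrowsAtLeast (x i) (· ^ r i))
    (hL : ∀ t, 1 ≤ t → ∑ i, θ i * log (x i t) ≤ L + K * log t) (hK : K < ∑ i, θ i * r i) :
    False := by
  refine false_of_sum_mul_log_le hθ hx (fun i => (eventually_gt_atTop 0).mono fun t ht =>
    rpow_pos_of_pos ht _) hL ?_
  refine (tendsto_log_atTop.const_mul_atTop (sub_pos.2 hK)).congr'
    ((eventually_gt_atTop 0).mono fun t ht => ?_)
  simp only [log_rpow ht, ← mul_assoc, ← sum_mul, sub_mul]

theorem false_of_growsAtLeast_log [DecidableEq ι] {s : ι → ℝ} {z : ι} (hθ : ∀ i, 0 ≤ θ i)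
    (hθz : 0 < θ z) (hx : ∀ i, GrowsAtLeast (x i) (· ^ s i)) (hxz : GrowsAtLeast (x z) log)
    (hsz : s z = 0) (hL : ∀ t, 1 ≤ t → ∑ i, θ i * log (x i t) ≤ L + K * log t)
    (hK : K ≤ ∑ i, θ i * s i) : False := by
  set f := Function.update (fun i t => t ^ s i) z log
  have hf : ∀ i, GrowsAtLeast (x i) (f i) ∧ ∀ᶠ t in atTop, 0 < f i t := fun i => by
    rcases eq_or_ne i z with rfl | hi
    · rw [show f i = log by simp [f]]
      exact ⟨hxz, tendsto_log_atTop.eventually_gt_atTop 0⟩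
    · rw [show f i = (· ^ s i) by simp [f, hi]]
      exact ⟨hx i, (eventually_gt_atTop 0).mono fun t ht => rpow_pos_of_pos ht _⟩
  refine false_of_sum_mul_log_le hθ (fun i => (hf i).1) (fun i => (hf i).2) hL ?_
  refine tendsto_atTop_mono' _ ?_
    ((tendsto_log_atTop.comp tendsto_log_atTop).const_mul_atTop hθz)
  filter_upwards [eventually_gt_atTop 0, eventually_ge_atTop 1] with t ht ht1
  have hsum : ∑ i, θ i * log (f i t) = (∑ i, θ i * s i) * log t + θ z * log (log t) := by
    calc ∑ i, θ i * log (f i t)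
        = ∑ i, (θ i * s i * log t + if i = z then θ z * log (log t) else 0) := by
          refine sum_congr rfl fun i _ => ?_
          rcases eq_or_ne i z with rfl | hi
          · simp [f, hsz]
          · simp [f, hi, log_rpow ht, mul_assoc]
      _ = _ := by rw [sum_add_distrib, sum_ite_eq', if_pos (mem_univ z), sum_mul]
  rw [hsum]
  have := mul_nonneg (sub_nonneg.2 hK) (log_nonneg ht1)
  simp only [Function.comp_apply]
  nlinarith

end WeightedLog

section Cyclic

variable {n : ℕ} [NeZero n]

theorem exists_pos_cyclic_weights {g : Fin n → ℝ} (hg : ∀ i, 0 < g i) (hprod : ∏ i, g i = 1) :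
    ∃ θ : Fin n → ℝ, (∀ i, 0 < θ i) ∧ ∑ i, θ i = 1 ∧ ∀ i, θ i = g i * θ (i - 1) := by
  obtain ⟨m, rfl⟩ : ∃ m, n = m + 1 := Nat.exists_eq_succ_of_ne_zero (NeZero.ne n)
  set φ : Fin (m + 1) → ℝ := fun i => ∏ j ∈ Iic i, g j
  have hφ : ∀ i, 0 < φ i := fun i => prod_pos fun j _ => hg j
  have hrec : ∀ i, φ i = g i * φ (i - 1) := by
    intro i
    rcases eq_or_ne i 0 with rfl | hi
    · have hlast : Iic (-1 : Fin (m + 1)) = univ := by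
        ext j
        simp only [mem_Iic, mem_univ, iff_true, Fin.le_def, Fin.coe_neg_one]
        omega
      have hzero : Iic (0 : Fin (m + 1)) = {0} := by
        ext j
        simp
      simp [φ, hlast, hzero, hprod]
    · have hIio : Iio i = Iic (i - 1) := by
        ext j
        simp only [mem_Iio, mem_Iic, Fin.lt_def, Fin.le_def, Fin.coe_sub_one, if_neg hi]
        have := Fin.pos_iff_ne_zero.2 hi
        omega
      simp only [φ, Iic_eq_cons_Iio, prod_cons, hIio]
  have hsum : 0 < ∑ j, φ j := sum_pos (fun j _ => hφ j) univ_nonempty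
  refine ⟨fun i => φ i / ∑ j, φ j, fun i => div_pos (hφ i) hsum, ?_, fun i => ?_⟩
  · rw [← sum_div, div_self hsum.ne']
  · simp only [hrec i, mul_div_assoc]

theorem exists_cyclic_weights {p : Fin n → ℝ} (hp : ∀ i, 0 < p i) (hprod : 1 < ∏ i, p i) :
    ∃ Q : ℝ, ∃ θ : Fin n → ℝ, 1 < Q ∧ (∀ i, 0 < θ i) ∧ ∑ i, θ i = 1 ∧
      ∀ i, p i * θ i = Q * θ (i - 1) := by
  have hP : 0 < ∏ i, p i := prod_pos fun i _ => hp i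
  have hn : (0 : ℝ) < n := Nat.cast_pos.2 (Nat.pos_of_ne_zero (NeZero.ne n))
  set Q := (∏ i, p i) ^ (n : ℝ)⁻¹
  have hQ : 1 < Q := one_lt_rpow hprod (inv_pos.2 hn)
  have hQn : Q ^ n = ∏ i, p i := by
    rw [← rpow_natCast, ← rpow_mul hP.le, inv_mul_cancel₀ hn.ne', rpow_one]
  obtain ⟨θ, hθ, hθsum, hθrec⟩ := exists_pos_cyclic_weights (g := fun i => Q / p i)
    (fun i => div_pos (by linarith) (hp i))
    (by rw [prod_div_distrib, prod_const, card_univ, Fintype.card_fin, hQn, div_self hP.ne'])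
  refine ⟨Q, θ, hQ, hθ, hθsum, fun i => ?_⟩
  rw [hθrec i, ← mul_assoc, mul_div_cancel₀ _ (hp i).ne']

theorem sum_mul_mul_comp_sub_one {Q : ℝ} {θ p : Fin n → ℝ} (hθp : ∀ i, p i * θ i = Q * θ (i - 1))
    (w : Fin n → ℝ) : ∑ i, θ i * (p i * w (i - 1)) = Q * ∑ i, θ i * w i := by
  rw [mul_sum, ← (Equiv.subRight (1 : Fin n)).sum_comp fun i => Q * (θ i * w i)]
  exact sum_congr rfl fun i _ => by
    simp only [Equiv.subRight_apply]
    linear_combination w (i - 1) * hθp i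

theorem sub_one_mul_sum_mul_eq {Q : ℝ} {θ p α s : Fin n → ℝ} (hθp : ∀ i, p i * θ i = Q * θ (i - 1))
    (hθsum : ∑ i, θ i = 1) (hs : ∀ i, s i = p i * s (i - 1) + 1 - α i) :
    (Q - 1) * ∑ i, θ i * s i = ∑ i, θ i * α i - 1 := by
  have : ∑ i, θ i * s i = Q * ∑ i, θ i * s i + 1 - ∑ i, θ i * α i := by
    calc ∑ i, θ i * s i = ∑ i, (θ i * (p i * s (i - 1)) + θ i - θ i * α i) :=
          sum_congr rfl fun i _ => by rw [hs i]; ring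
      _ = _ := by rw [sum_sub_distrib, sum_add_distrib, sum_mul_mul_comp_sub_one hθp, hθsum]
  linarith

end Cyclic

section Rates

variable {n : ℕ} [NeZero n] {p α : Fin n → ℝ}

variable (p α) in
/-- Integrating `x_i' ≥ c_i t^{-α_i} x_{i-1}^{p_i}` once turns `x_j ≳ t^{r_j}` into
`x_i ≳ t^{rateMap p α r i}`; the `max` with `0` is the trivial bound `x_i ≳ 1`. -/
def rateMap (r : Fin n → ℝ) (i : Fin n) : ℝ := max 0 (p i * r (i - 1) + 1 - α i)

theorem rateMap_nonneg (r : Fin n → ℝ) : 0 ≤ rateMap p α r := fun _ => le_max_left _ _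

theorem monotone_iterate_rateMap (hp : ∀ i, 0 ≤ p i) :
    Monotone fun k => (rateMap p α)^[k] 0 :=
  Monotone.monotone_iterate_of_le_map
    (fun _ _ h i => max_le_max le_rfl (by gcongr; exacts [hp i, h _])) (rateMap_nonneg 0)

theorem sum_rateMap_sub_sum (r : Fin n → ℝ) :
    ∑ i, rateMap p α r i - ∑ i, r i = ∑ i, (rateMap p α r i - (p i * r (i - 1) + 1 - α i)) +
      ∑ i, (p (i + 1) - 1) * r i + (n - ∑ i, α i) := by
  have hshift : ∑ i, p (i + 1) * r i = ∑ i, p i * r (i - 1) := by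
    rw [← (Equiv.subRight (1 : Fin n)).sum_comp]
    simp
  simp only [sum_sub_distrib, sum_add_distrib, sub_mul, one_mul, hshift, sum_const, card_univ,
    Fintype.card_fin, nsmul_eq_mul, mul_one]
  ring

theorem sum_add_le_sum_rateMap (hp : ∀ i, 1 ≤ p i) (hα : ∑ i, α i ≤ n) {r : Fin n → ℝ}
    (hr : 0 ≤ r) (z : Fin n) : ∑ i, r i + (p (z + 1) - 1) * r z ≤ ∑ i, rateMap p α r i := by
  have h1 : 0 ≤ ∑ i, (rateMap p α r i - (p i * r (i - 1) + 1 - α i)) :=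
    sum_nonneg fun i _ => sub_nonneg.2 (le_max_right _ _)
  have h2 : (p (z + 1) - 1) * r z ≤ ∑ i, (p (i + 1) - 1) * r i :=
    single_le_sum (f := fun i => (p (i + 1) - 1) * r i)
      (fun i _ => mul_nonneg (sub_nonneg.2 (hp _)) (hr i)) (mem_univ z)
  linarith [sum_rateMap_sub_sum (p := p) (α := α) r]

theorem eq_of_isFixedPt_rateMap (hp : ∀ i, 1 ≤ p i) (hα : ∑ i, α i ≤ n) {s : Fin n → ℝ}
    (hs : Function.IsFixedPt (rateMap p α) s) (i : Fin n) : s i = p i * s (i - 1) + 1 - α i := by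
  have hs' : ∀ i, rateMap p α s i = s i := congrFun hs
  have h := sum_rateMap_sub_sum (p := p) (α := α) s
  simp only [hs', sub_self] at h
  have hlin : ∀ i ∈ univ, 0 ≤ s i - (p i * s (i - 1) + 1 - α i) :=
    fun i _ => sub_nonneg.2 ((hs' i).symm ▸ le_max_right _ _)
  have hsum : 0 ≤ ∑ i, (p (i + 1) - 1) * s i := sum_nonneg fun i _ =>
    mul_nonneg (sub_nonneg.2 (hp _)) ((hs' i).symm ▸ rateMap_nonneg s i)
  have hzero : ∑ i, (s i - (p i * s (i - 1) + 1 - α i)) = 0 :=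
    le_antisymm (by linarith) (sum_nonneg hlin)
  linarith [(sum_eq_zero_iff_of_nonneg hlin).1 hzero i (mem_univ i)]

theorem exists_lt_sum_mul_iterate_rateMap (hp : ∀ i, 1 ≤ p i) (hα : ∑ i, α i ≤ n) {z : Fin n}
    (hpz : 1 < p (z + 1)) {k : ℕ} (hk : 0 < (rateMap p α)^[k] 0 z) {θ : Fin n → ℝ}
    (hθ : ∀ i, 0 < θ i) (K : ℝ) : ∃ m, K < ∑ i, θ i * (rateMap p α)^[m] 0 i := by
  have hmono := monotone_iterate_rateMap (α := α) fun i => zero_le_one.trans (hp i)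
  set r := fun k => (rateMap p α)^[k] 0
  have hδ : 0 < (p (z + 1) - 1) * r k z := mul_pos (sub_pos.2 hpz) hk
  have hgrowth : ∀ m : ℕ, ∑ i, r k i + m * ((p (z + 1) - 1) * r k z) ≤ ∑ i, r (k + m) i := by
    intro m
    induction m with
    | zero => simp
    | succ m ih =>
      have hstep := sum_add_le_sum_rateMap hp hα (hmono (Nat.zero_le (k + m))) z
      have hz : r k z ≤ r (k + m) z := hmono (Nat.le_add_right k m) z
      simp only [r, ← add_assoc, Function.iterate_succ_apply'] at hstep ⊢
      push_cast
      nlinarith [sub_pos.2 hpz]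
  obtain ⟨j, -, hj⟩ := exists_min_image univ θ univ_nonempty
  obtain ⟨m, hm⟩ := exists_nat_gt ((K / θ j - ∑ i, r k i) / ((p (z + 1) - 1) * r k z))
  refine ⟨k + m, ?_⟩
  calc K = θ j * (K / θ j) := by field_simp [(hθ j).ne']
    _ < θ j * ∑ i, r (k + m) i := by
        rw [div_lt_iff₀ hδ] at hm
        exact mul_lt_mul_of_pos_left (by linarith [hgrowth m]) (hθ j)
    _ ≤ ∑ i, θ i * r (k + m) i := by
        rw [mul_sum]
        exact sum_le_sum fun i _ =>
          mul_le_mul_of_nonneg_right (hj i (mem_univ i)) (hmono (Nat.zero_le _) i)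

open Fin.NatCast in
/-- The exponent at `z + d` is frozen after `d` steps. -/
theorem isFixedPt_rateMap_iterate {z : Fin n} (hz : ∀ k, (rateMap p α)^[k] 0 z = 0) :
    Function.IsFixedPt (rateMap p α) ((rateMap p α)^[n] 0) := by
  have hfrozen : ∀ d k, d ≤ k →
      (rateMap p α)^[k] 0 (z + d) = (rateMap p α)^[d] 0 (z + d) := by
    intro d
    induction d with
    | zero => intro k _; simp [hz]
    | succ d ih =>
      intro k hk
      obtain ⟨k, rfl⟩ := Nat.exists_eq_add_of_le' (Nat.one_le_of_lt hk)
      have hprev : z + ((d + 1 : ℕ) : Fin n) - 1 = z + d := by push_cast; abel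
      simp only [Function.iterate_succ_apply', rateMap, hprev, ih k (by omega)]
  funext i
  have hi : z + (((i - z : Fin n) : ℕ) : Fin n) = i := by rw [Fin.cast_val_eq_self]; abel
  rw [← Function.iterate_succ_apply' (rateMap p α), ← hi,
    hfrozen _ (n + 1) (by omega), hfrozen _ n (by omega)]

end Rates

structure IsSupersolution {n : ℕ} [NeZero n] (c p α : Fin n → ℝ) (x x' : Fin n → ℝ → ℝ) :
    Prop where
  pos : ∀ i t, 1 ≤ t → 0 < x i t
  hasDerivWithinAt : ∀ i t, 1 ≤ t → HasDerivWithinAt (x i) (x' i t) (Set.Ici 1) t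
  le_deriv : ∀ i t, 1 ≤ t → c i * t ^ (-(α i)) * x (i - 1) t ^ (p i) ≤ x' i t

namespace IsSupersolution

variable {n : ℕ} [NeZero n] {c p α : Fin n → ℝ} {x x' : Fin n → ℝ → ℝ}

theorem growsAtLeast_one (hs : IsSupersolution c p α x x') (hc : ∀ i, 0 ≤ c i) (i : Fin n) :
    GrowsAtLeast (x i) (· ^ (0 : ℝ)) := by
  refine ⟨x i 1, hs.pos i 1 le_rfl, (eventually_ge_atTop 1).mono fun t ht => ?_⟩
  have := sub_le_sub_of_hasDerivWithinAt_Ici le_rfl ht (hs.hasDerivWithinAt i)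
    (fun s _ => hasDerivWithinAt_const s _ (0 : ℝ)) fun s ⟨hs1, _⟩ =>
      (mul_nonneg (mul_nonneg (hc i) (rpow_nonneg (zero_le_one.trans hs1) _))
        (rpow_nonneg (hs.pos _ s hs1).le _)).trans (hs.le_deriv i s hs1)
  simp only [rpow_zero, mul_one]
  linarith

theorem growsAtLeast_iterate_rateMap (hs : IsSupersolution c p α x x') (hc : ∀ i, 0 < c i)
    (hp : ∀ i, 0 ≤ p i) (k : ℕ) (i : Fin n) :
    GrowsAtLeast (x i) (· ^ ((rateMap p α)^[k] 0 i)) := by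
  induction k generalizing i with
  | zero => exact hs.growsAtLeast_one (fun i => (hc i).le) i
  | succ k ih =>
    rw [Function.iterate_succ_apply']
    rcases le_or_gt (p i * (rateMap p α)^[k] 0 (i - 1) + 1 - α i) 0 with hle | hlt
    · rw [rateMap, max_eq_left hle]
      exact hs.growsAtLeast_one (fun i => (hc i).le) i
    · rw [rateMap, max_eq_right hlt.le]
      exact (ih (i - 1)).rpow_of_deriv (hc i) (hp i) hlt (hs.hasDerivWithinAt i) (hs.pos i)
        (hs.le_deriv i)

theorem hasDerivWithinAt_sum_mul_log (hs : IsSupersolution c p α x x') (θ : Fin n → ℝ) (t : ℝ)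
    (ht : 1 ≤ t) :
    HasDerivWithinAt (fun t => ∑ i, θ i * log (x i t)) (∑ i, θ i * (x' i t / x i t))
      (Set.Ici 1) t :=
  HasDerivWithinAt.fun_sum fun i _ =>
    ((hs.hasDerivWithinAt i t ht).log (hs.pos i t ht).ne').const_mul (θ i)

/-- Jensen's inequality, where `p_i θ_i = Q θ_{i-1}` collapses the `log x_{i-1}` terms into `Q`
times the weighted logarithm itself. -/
theorem exp_le_deriv_sum_mul_log (hs : IsSupersolution c p α x x') (hc : ∀ i, 0 < c i)
    {Q : ℝ} {θ : Fin n → ℝ} (hθ : ∀ i, 0 < θ i) (hθsum : ∑ i, θ i = 1)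
    (hθp : ∀ i, p i * θ i = Q * θ (i - 1)) (t : ℝ) (ht : 1 ≤ t) :
    exp (∑ i, θ i * log (c i)) * t ^ (-∑ i, θ i * α i) *
        exp ((Q - 1) * ∑ i, θ i * log (x i t)) ≤ ∑ i, θ i * (x' i t / x i t) := by
  have ht0 : 0 < t := by linarith
  set z := fun i => c i * t ^ (-α i) * x (i - 1) t ^ p i / x i t
  have hz : ∀ i, 0 < z i := fun i =>
    div_pos (mul_pos (mul_pos (hc i) (rpow_pos_of_pos ht0 _))
      (rpow_pos_of_pos (hs.pos _ t ht) _)) (hs.pos i t ht)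
  have hlogz : ∀ i, log (z i) =
      log (c i) - α i * log t + p i * log (x (i - 1) t) - log (x i t) := fun i => by
    rw [log_div (mul_pos (mul_pos (hc i) (rpow_pos_of_pos ht0 _))
        (rpow_pos_of_pos (hs.pos _ t ht) _)).ne' (hs.pos i t ht).ne',
      log_mul (mul_pos (hc i) (rpow_pos_of_pos ht0 _)).ne' (rpow_pos_of_pos (hs.pos _ t ht) _).ne',
      log_mul (hc i).ne' (rpow_pos_of_pos ht0 _).ne', log_rpow ht0, log_rpow (hs.pos _ t ht)]
    ring
  have hsum : ∑ i, θ i * log (z i) = ∑ i, θ i * log (c i) - (∑ i, θ i * α i) * log t +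
      (Q - 1) * ∑ i, θ i * log (x i t) := by
    rw [sub_mul, one_mul, ← sum_mul_mul_comp_sub_one hθp, sum_mul, ← sum_sub_distrib,
      ← sum_sub_distrib, ← sum_add_distrib]
    exact sum_congr rfl fun i _ => by rw [hlogz]; ring
  calc _ = exp (∑ i, θ i * log (z i)) := by
        rw [rpow_def_of_pos ht0, ← exp_add, ← exp_add, hsum]
        ring_nf
    _ ≤ ∑ i, θ i * z i := exp_sum_mul_log_le _ (fun i _ => (hθ i).le) hθsum fun i _ => hz i
    _ ≤ _ := sum_le_sum fun i _ => mul_le_mul_of_nonneg_left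
        (div_le_div_of_nonneg_right (hs.le_deriv i t ht) (hs.pos i t ht).le) (hθ i).le

end IsSupersolution

/-- Generalised Gronwall inequality: the cyclic system of differential inequalities
`x_i'(t) ≥ c_i t^{-α_i} x_{i-1}(t)^{p_i}` on `[1,∞)` with positive values, `p_i ≥ 1`,
`∏ p_i > 1` and `∑ α_i ≤ n`, has no global solution. -/
theorem stmt_1 (n : ℕ) [NeZero n] (c p α : Fin n → ℝ)
    (hc : ∀ i, 0 < c i) (hp : ∀ i, 1 ≤ p i)
    (hprod : 1 < ∏ i, p i) (hα : ∑ i, α i ≤ (n : ℝ)) :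
    ¬ ∃ (x x' : Fin n → ℝ → ℝ),
      (∀ i t, 1 ≤ t → 0 < x i t) ∧
      (∀ i t, 1 ≤ t → HasDerivWithinAt (x i) (x' i t) (Set.Ici 1) t) ∧
      (∀ i t, 1 ≤ t → c i * t ^ (-(α i)) * (x (i - 1) t) ^ (p i) ≤ x' i t) := by
  rintro ⟨x, x', hpos, hderiv, hineq⟩
  have hs : IsSupersolution c p α x x' := ⟨hpos, hderiv, hineq⟩
  have hp0 : ∀ i, 0 ≤ p i := fun i => zero_le_one.trans (hp i)
  obtain ⟨Q, θ, hQ, hθ, hθsum, hθp⟩ :=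
    exists_cyclic_weights (fun i => one_pos.trans_le (hp i)) hprod
  have hy := hs.hasDerivWithinAt_sum_mul_log θ
  have hyy := hs.exp_le_deriv_sum_mul_log hc hθ hθsum hθp
  rcases le_or_gt (∑ i, θ i * α i) 1 with hσ | hσ
  · exact false_of_exp_le_deriv_of_le_one (exp_pos _) (sub_pos.2 hQ) hσ hy hyy
  obtain ⟨L, hL⟩ := le_add_mul_log_of_exp_le_deriv (exp_pos _) (sub_pos.2 hQ) hσ hy hyy
  obtain ⟨j, hj⟩ : ∃ j, 1 < p j := by
    by_contra! h
    exact hprod.not_ge (prod_le_one (fun i _ => hp0 i) fun i _ => h i)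
  by_cases hz : ∃ k, 0 < (rateMap p α)^[k] 0 (j - 1)
  · obtain ⟨k, hk⟩ := hz
    obtain ⟨m, hm⟩ := exists_lt_sum_mul_iterate_rateMap hp hα (by rwa [sub_add_cancel]) hk hθ
      ((∑ i, θ i * α i - 1) / (Q - 1))
    exact false_of_growsAtLeast_rpow (fun i => (hθ i).le)
      (hs.growsAtLeast_iterate_rateMap hc hp0 m) hL hm
  have hzero : ∀ k, (rateMap p α)^[k] 0 (j - 1) = 0 := fun k =>
    le_antisymm (not_lt.1 fun h => hz ⟨k, h⟩) (monotone_iterate_rateMap hp0 k.zero_le (j - 1))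
  have hlin := eq_of_isFixedPt_rateMap hp hα (isFixedPt_rateMap_iterate hzero)
  have hxz := (hs.growsAtLeast_iterate_rateMap hc hp0 n (j - 1 - 1)).log_of_deriv (hc _) (hp0 _)
    (by rw [← hlin, hzero]) (hs.hasDerivWithinAt _) (hs.pos _) (hs.le_deriv _)
  refine false_of_growsAtLeast_log (fun i => (hθ i).le) (hθ (j - 1))
    (hs.growsAtLeast_iterate_rateMap hc hp0 n) hxz (hzero n) hL ?_
  rw [div_le_iff₀ (sub_pos.2 hQ), mul_comm, sub_one_mul_sum_mul_eq hθp hθsum hlin]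
end

section
/- Let d ≥ 1 and let α_{ij}, β_{ij}, γ_{ij} (1 ≤ i, j ≤ d) be real numbers with γ_{ij} > 0 for all i, j. If the fixed-point equation x = F(x) has a solution x ∈ ℝ^d, then it has a maximal solution x̄ (i.e. x̄ = F(x̄) and x̄_i ≥ y_i for every solution y of y = F(y) and every i); moreover, setting α̂_i = min_{1≤j≤d} α_{ij}, the iterates Fⁿ(α̂) converge to x̄ as n → ∞. -/
/-- The componentwise min-map `F_i(y) = min_j min(α_{ij}, α_{ij} + β_{ij} + γ_{ij} y_j)`. -/
noncomputable def Fmin {d : ℕ} (α β γ : Fin d → Fin d → ℝ) (y : Fin d → ℝ) : Fin d → ℝ :=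
  fun i => ⨅ j, min (α i j) (α i j + β i j + γ i j * y j)

/-- If `γ_{ij} > 0` and the fixed-point equation `x = F(x)` has a solution, then it has a
maximal solution, which is moreover the limit of the iterates `Fⁿ(α̂)` with
`α̂_i = min_j α_{ij}`. -/
theorem stmt_2 (d : ℕ) (hd : 1 ≤ d) (α β γ : Fin d → Fin d → ℝ)
    (hγ : ∀ i j, 0 < γ i j)
    (hsol : ∃ x : Fin d → ℝ, Fmin α β γ x = x) :
    ∃ xbar : Fin d → ℝ, Fmin α β γ xbar = xbar ∧
      (∀ y : Fin d → ℝ, Fmin α β γ y = y → ∀ i, y i ≤ xbar i) ∧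
      Filter.Tendsto (fun n : ℕ => (Fmin α β γ)^[n] (fun i => ⨅ j, α i j))
        Filter.atTop (nhds xbar) := by
  obtain ⟨x, hx⟩ := hsol
  haveI : NeZero d := ⟨by omega⟩
  set F := Fmin α β γ with hF
  set ahat : Fin d → ℝ := fun i => ⨅ j, α i j with hahat
  -- monotonicity of F
  have hmono : ∀ y z : Fin d → ℝ, (∀ j, y j ≤ z j) → ∀ i, F y i ≤ F z i := by
    intro y z h i
    refine ciInf_mono (Finite.bddBelow_range _) fun j => ?_
    refine min_le_min le_rfl ?_
    have := mul_le_mul_of_nonneg_left (h j) (hγ i j).le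
    linarith
  -- F y ≤ ahat always
  have hle : ∀ y : Fin d → ℝ, ∀ i, F y i ≤ ahat i := by
    intro y i
    refine ciInf_mono (Finite.bddBelow_range _) fun j => min_le_left _ _
  set a : ℕ → Fin d → ℝ := fun n => F^[n] ahat with ha
  have ha_succ : ∀ n, a (n + 1) = F (a n) := by
    intro n; simp [ha, Function.iterate_succ_apply']
  -- antitone
  have hanti : ∀ n i, a (n + 1) i ≤ a n i := by
    intro n
    induction n with
    | zero => intro i; rw [ha_succ]; exact hle _ i
    | succ n ih =>
      intro i
      rw [ha_succ n, ha_succ (n + 1)]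
      exact hmono _ _ ih i
  have hanti' : ∀ i, Antitone fun n => a n i := by
    intro i
    exact antitone_nat_of_succ_le fun n => hanti n i
  -- lower bound: any fixed point y satisfies y ≤ a n
  have hlb : ∀ y : Fin d → ℝ, F y = y → ∀ n i, y i ≤ a n i := by
    intro y hy n
    induction n with
    | zero => intro i; rw [← hy]; exact hle y i
    | succ n ih => intro i; rw [ha_succ, ← hy]; exact hmono _ _ ih i
  set xbar : Fin d → ℝ := fun i => ⨅ n, a n i with hxbar
  have hbdd : ∀ i, BddBelow (Set.range fun n => a n i) :=
    fun i => ⟨x i, by rintro _ ⟨n, rfl⟩; exact hlb x hx n i⟩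
  have htend_i : ∀ i, Filter.Tendsto (fun n => a n i) Filter.atTop (nhds (xbar i)) :=
    fun i => tendsto_atTop_ciInf (hanti' i) (hbdd i)
  have htend : Filter.Tendsto a Filter.atTop (nhds xbar) := by
    rw [tendsto_pi_nhds]; exact htend_i
  -- continuity of F
  have hcont : Continuous F := by
    rw [continuous_pi_iff]
    intro i
    have : (fun y : Fin d → ℝ => F y i) =
        fun y => Finset.univ.inf' Finset.univ_nonempty
          (fun j => min (α i j) (α i j + β i j + γ i j * y j)) := by
      funext y
      rw [Finset.inf'_univ_eq_ciInf]
      rfl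
    rw [this]
    refine Continuous.finset_inf'_apply Finset.univ_nonempty fun j _ => ?_
    exact continuous_const.min (continuous_const.add (continuous_const.mul (continuous_apply j)))
  -- xbar is a fixed point
  have hfix : F xbar = xbar := by
    have h1 : Filter.Tendsto (fun n => a (n + 1)) Filter.atTop (nhds xbar) :=
      htend.comp (Filter.tendsto_add_atTop_nat 1)
    have h2 : Filter.Tendsto (fun n => F (a n)) Filter.atTop (nhds (F xbar)) :=
      (hcont.tendsto xbar).comp htend
    have : (fun n => a (n + 1)) = fun n => F (a n) := funext ha_succ
    rw [this] at h1
    exact tendsto_nhds_unique h2 h1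
  refine ⟨xbar, hfix, fun y hy i => ?_, htend⟩
  exact le_ciInf fun n => hlb y hy n i
end

section
/- Let d ≥ 1 and let α_{ij}, β_{ij}, γ_{ij} (1 ≤ i, j ≤ d) be real numbers with γ_{ij} > 1 for all i, j. Assume there exists ε > 0 such that, for every perturbed family of coefficients with α̃_{ij} ∈ [α_{ij}−ε, α_{ij}+ε], β̃_{ij} ∈ [β_{ij}−ε, β_{ij}+ε], γ̃_{ij} ∈ [γ_{ij}−ε, γ_{ij}+ε], the corresponding fixed-point equation x = F̃(x) has a solution in ℝ^d. Let x̄ be the maximal solution of x = F(x) for the original coefficients. Then there is no cycle of indices i_1, i_2, …, i_k, i_{k+1} = i_1 (k ≥ 1) such that x̄_{i_l} = α_{i_l i_{l+1}} + β_{i_l i_{l+1}} + γ_{i_l i_{l+1}} · x̄_{i_{l+1}} for every l ∈ {1,…,k}. -/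
lemma Fmin_le_apply {d : ℕ} (α β γ : Fin d → Fin d → ℝ) (y : Fin d → ℝ) (i j : Fin d) :
    Fmin α β γ y i ≤ min (α i j) (α i j + β i j + γ i j * y j) :=
  ciInf_le (Set.finite_range _).bddBelow j

lemma Fmin_mono {d : ℕ} [Nonempty (Fin d)] (α β γ : Fin d → Fin d → ℝ) (hγ : ∀ i j, 0 < γ i j)
    {x y : Fin d → ℝ} (h : x ≤ y) : Fmin α β γ x ≤ Fmin α β γ y := by
  intro i
  refine le_ciInf fun j => (Fmin_le_apply α β γ x i j).trans ?_
  exact min_le_min le_rfl (by nlinarith [(hγ i j).le, h j])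

/-- If `γ_{ij} > 1` and all `ε`-perturbations of the coefficients still admit a fixed point,
then the directed graph associated to the maximal fixed point `x̄` (edge `j → i` when the
minimum defining `x̄_i` is attained by the affine term in `x̄_j`) has no closed directed loop. -/
theorem stmt_3 (d : ℕ) (hd : 1 ≤ d) (α β γ : Fin d → Fin d → ℝ)
    (hγ : ∀ i j, 1 < γ i j)
    (ε : ℝ) (hε : 0 < ε)
    (hpert : ∀ α' β' γ' : Fin d → Fin d → ℝ,
      (∀ i j, |α' i j - α i j| ≤ ε) → (∀ i j, |β' i j - β i j| ≤ ε) →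
      (∀ i j, |γ' i j - γ i j| ≤ ε) → ∃ x : Fin d → ℝ, Fmin α' β' γ' x = x)
    (xbar : Fin d → ℝ) (hfix : Fmin α β γ xbar = xbar)
    (hmax : ∀ y : Fin d → ℝ, Fmin α β γ y = y → ∀ i, y i ≤ xbar i) :
    ¬ ∃ (k : ℕ) (f : ℕ → Fin d), 0 < k ∧ f k = f 0 ∧
      ∀ l < k, xbar (f l) =
        α (f l) (f (l + 1)) + β (f l) (f (l + 1)) + γ (f l) (f (l + 1)) * xbar (f (l + 1)) := by
  rintro ⟨k, f, hk, hfk, hcyc⟩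
  haveI : Nonempty (Fin d) := ⟨⟨0, hd⟩⟩
  set β' : Fin d → Fin d → ℝ := fun i j => β i j - ε with hβ'
  obtain ⟨y, hy⟩ := hpert α β' γ
    (fun i j => by simp [hε.le]) (fun i j => by simp [hβ', abs_of_nonneg hε.le])
    (fun i j => by simp [hε.le])
  set F := Fmin α β γ with hF
  have hγ0 : ∀ i j, 0 < γ i j := fun i j => lt_trans one_pos (hγ i j)
  have hFmono : ∀ {a b : Fin d → ℝ}, a ≤ b → F a ≤ F b := fun h => Fmin_mono α β γ hγ0 h
  -- y is a sub-solution of F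
  have hyi : ∀ i, Fmin α β' γ y i = y i := fun i => congrFun hy i
  have hysub : y ≤ F y := by
    intro i
    rw [← hyi i]
    refine le_ciInf fun j => (Fmin_le_apply α β' γ y i j).trans ?_
    refine min_le_min le_rfl ?_
    simp only [hβ']
    linarith
  -- the upper bound
  set j₀ : Fin d := ⟨0, hd⟩ with hj₀
  set M : Fin d → ℝ := fun i => α i j₀ with hM
  have hFub : ∀ (α'' β'' : Fin d → Fin d → ℝ) (x : Fin d → ℝ) (i : Fin d),
      Fmin α'' β'' γ x i ≤ α'' i j₀ :=
    fun α'' β'' x i => (Fmin_le_apply α'' β'' γ x i j₀).trans (min_le_left _ _)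
  -- Knaster–Tarski by hand: the sup of sub-solutions is a fixed point of F
  set S : Set (Fin d → ℝ) := {v | v ≤ F v ∧ ∀ i, v i ≤ M i} with hS
  have hyS : y ∈ S := ⟨hysub, fun i => by rw [← hy]; exact hFub α β' y i⟩
  set z : Fin d → ℝ := fun i => sSup ((fun v => v i) '' S) with hz
  have hbdd : ∀ i, BddAbove ((fun v => v i) '' S) := by
    intro i
    exact ⟨M i, by rintro t ⟨v, hv, rfl⟩; exact hv.2 i⟩
  have hle_z : ∀ v ∈ S, v ≤ z := fun v hv i => le_csSup (hbdd i) ⟨v, hv, rfl⟩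
  have hz_le : z ≤ F z := by
    intro i
    refine csSup_le ⟨y i, y, hyS, rfl⟩ ?_
    rintro t ⟨v, hv, rfl⟩
    exact (hv.1 i).trans (hFmono (hle_z v hv) i)
  have hFzS : F z ∈ S := ⟨hFmono hz_le, fun i => hFub α β z i⟩
  have hzfix : F z = z := le_antisymm (hle_z _ hFzS) hz_le
  have hzx : ∀ i, z i ≤ xbar i := hmax z hzfix
  have hyx : ∀ i, y i ≤ xbar i := fun i => (hle_z y hyS i).trans (hzx i)
  -- around the cycle, the gap grows by ε each step
  have hstep : ∀ l, l < k →
      ε + (xbar (f (l + 1)) - y (f (l + 1))) ≤ xbar (f l) - y (f l) := by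
    intro l hl
    have h1 : y (f l) ≤ α (f l) (f (l + 1)) + β (f l) (f (l + 1)) - ε
        + γ (f l) (f (l + 1)) * y (f (l + 1)) := by
      rw [← hyi (f l)]
      refine (Fmin_le_apply α β' γ y (f l) (f (l + 1))).trans ?_
      refine (min_le_right _ _).trans (le_of_eq ?_)
      simp only [hβ']; ring
    have h2 := hcyc l hl
    have h3 := hyx (f (l + 1))
    have h4 := hγ (f l) (f (l + 1))
    nlinarith [mul_nonneg (sub_nonneg.2 h4.le) (sub_nonneg.2 h3)]
  have hall : ∀ m, m ≤ k →
      (m : ℝ) * ε + (xbar (f m) - y (f m)) ≤ xbar (f 0) - y (f 0) := by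
    intro m
    induction m with
    | zero => intro _; simp
    | succ n ih =>
      intro hn
      have h1 := ih (Nat.le_of_succ_le hn)
      have h2 := hstep n (Nat.lt_of_succ_le hn)
      push_cast
      linarith
  have := hall k le_rfl
  rw [hfk] at this
  have hk1 : (1 : ℝ) ≤ (k : ℝ) := by exact_mod_cast hk
  nlinarith
end

section
/- Let σ, z ∈ ℝ with σ ≠ 1 and z ≠ 1. Let F : ℝ² → ℝ be continuous with F(u,v) = 0 unless 1 ≤ u ≤ v, and suppose |F(u,v)| ≤ v^{−σ} u^{−z} for all 1 ≤ u ≤ v. Define ψ(u,v) = ∫_1^u ∫_u^v F(u',v') dv' du'. Then there is a constant C depending only on σ and z such that |ψ(u,v)| ≤ C · (v − u) · v^{−1} · u^{max(0, 1−z)} · (u^{1−σ} + v^{1−σ}) for all 1 ≤ u ≤ v. -/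
open intervalIntegral Real

lemma rpowII {a b e : ℝ} (ha : 0 < a) (hab : a ≤ b) :
    IntervalIntegrable (fun t : ℝ => t ^ e) MeasureTheory.volume a b := by
  apply ContinuousOn.intervalIntegrable
  apply ContinuousOn.rpow_const continuousOn_id
  intro x hx
  rw [Set.uIcc_of_le hab] at hx
  exact Or.inl (ne_of_gt (lt_of_lt_of_le ha hx.1))

lemma intA {σ u v : ℝ} (hσ : σ ≠ 1) (hu : 1 ≤ u) (huv : u ≤ v) :
    (∫ t in u..v, t ^ (-σ)) ≤
      max 2 (2 / |1 - σ|) * (v - u) * v⁻¹ * (u ^ (1 - σ) + v ^ (1 - σ)) := by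
  have hu0 : (0:ℝ) < u := lt_of_lt_of_le one_pos hu
  have hv0 : (0:ℝ) < v := lt_of_lt_of_le hu0 huv
  have hS : (0:ℝ) ≤ u ^ (1 - σ) + v ^ (1 - σ) :=
    add_nonneg (Real.rpow_nonneg hu0.le _) (Real.rpow_nonneg hv0.le _)
  have h1σ : |1 - σ| ≠ 0 := abs_ne_zero.2 (sub_ne_zero.2 (Ne.symm hσ))
  have h1σ' : (0:ℝ) < |1 - σ| := lt_of_le_of_ne (abs_nonneg _) (Ne.symm h1σ)
  rcases le_or_gt v (2 * u) with hcase | hcase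
  · -- v ≤ 2u : bound integrand by constant
    have hptw : ∀ t ∈ Set.Icc u v, t ^ (-σ) ≤ u ^ (-σ) + v ^ (-σ) := by
      intro t ht
      rcases le_or_gt 0 σ with hσ0 | hσ0
      · have h1 : t ^ (-σ) ≤ u ^ (-σ) :=
          Real.rpow_le_rpow_of_nonpos hu0 ht.1 (by linarith)
        have h2 : (0:ℝ) ≤ v ^ (-σ) := Real.rpow_nonneg hv0.le _
        linarith
      · have h1 : t ^ (-σ) ≤ v ^ (-σ) :=
          Real.rpow_le_rpow (le_trans hu0.le ht.1) ht.2 (by linarith)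
        have h2 : (0:ℝ) ≤ u ^ (-σ) := Real.rpow_nonneg hu0.le _
        linarith
    have h1 : (∫ t in u..v, t ^ (-σ)) ≤ ∫ _t in u..v, (u ^ (-σ) + v ^ (-σ)) :=
      intervalIntegral.integral_mono_on huv (rpowII hu0 huv)
        intervalIntegrable_const hptw
    rw [intervalIntegral.integral_const, smul_eq_mul] at h1
    have hus : u ^ (-σ) = u ^ (1 - σ) * u⁻¹ := by
      rw [← Real.rpow_neg_one u, ← Real.rpow_add hu0]; ring_nf
    have hvs : v ^ (-σ) = v ^ (1 - σ) * v⁻¹ := by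
      rw [← Real.rpow_neg_one v, ← Real.rpow_add hv0]; ring_nf
    have huinv : u⁻¹ ≤ 2 * v⁻¹ := by
      nlinarith [mul_inv_cancel₀ hu0.ne', mul_inv_cancel₀ hv0.ne',
        mul_pos (inv_pos.2 hu0) (inv_pos.2 hv0), inv_pos.2 hu0, inv_pos.2 hv0]
    have h2 : u ^ (-σ) + v ^ (-σ) ≤ 2 * v⁻¹ * (u ^ (1 - σ) + v ^ (1 - σ)) := by
      rw [hus, hvs]
      have hvinv : v⁻¹ ≤ 2 * v⁻¹ := by
        have := inv_nonneg.2 hv0.le; linarith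
      have a1 : u ^ (1 - σ) * u⁻¹ ≤ u ^ (1 - σ) * (2 * v⁻¹) :=
        mul_le_mul_of_nonneg_left huinv (Real.rpow_nonneg hu0.le _)
      have a2 : v ^ (1 - σ) * v⁻¹ ≤ v ^ (1 - σ) * (2 * v⁻¹) :=
        mul_le_mul_of_nonneg_left hvinv (Real.rpow_nonneg hv0.le _)
      nlinarith
    have hvu : (0:ℝ) ≤ v - u := by linarith
    calc (∫ t in u..v, t ^ (-σ)) ≤ (v - u) * (u ^ (-σ) + v ^ (-σ)) := h1
      _ ≤ (v - u) * (2 * v⁻¹ * (u ^ (1 - σ) + v ^ (1 - σ))) :=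
          mul_le_mul_of_nonneg_left h2 hvu
      _ = 2 * (v - u) * v⁻¹ * (u ^ (1 - σ) + v ^ (1 - σ)) := by ring
      _ ≤ max 2 (2 / |1 - σ|) * (v - u) * v⁻¹ * (u ^ (1 - σ) + v ^ (1 - σ)) := by
          have : (0:ℝ) ≤ (v - u) * v⁻¹ * (u ^ (1 - σ) + v ^ (1 - σ)) :=
            mul_nonneg (mul_nonneg hvu (inv_nonneg.2 hv0.le)) hS
          nlinarith [le_max_left (2:ℝ) (2 / |1 - σ|)]
  · -- 2u < v : use exact formula
    have hr : (-σ : ℝ) ≠ -1 := by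
      intro h; apply hσ; linarith [neg_injective h]
    have h0m : (0:ℝ) ∉ Set.uIcc u v := Set.notMem_uIcc_of_lt hu0 hv0
    have hJ := integral_rpow (a := u) (b := v) (Or.inr ⟨hr, h0m⟩)
    have he : -σ + 1 = 1 - σ := by ring
    rw [he] at hJ
    rw [hJ]
    have hnum : |v ^ (1 - σ) - u ^ (1 - σ)| ≤ u ^ (1 - σ) + v ^ (1 - σ) := by
      have := abs_sub (v ^ (1 - σ)) (u ^ (1 - σ))
      rw [abs_of_nonneg (Real.rpow_nonneg hv0.le _),
        abs_of_nonneg (Real.rpow_nonneg hu0.le _)] at this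
      linarith
    have hhalf : (1:ℝ) / 2 ≤ (v - u) * v⁻¹ := by
      nlinarith [mul_inv_cancel₀ hv0.ne', inv_pos.2 hv0]
    calc (v ^ (1 - σ) - u ^ (1 - σ)) / (1 - σ)
        ≤ |(v ^ (1 - σ) - u ^ (1 - σ)) / (1 - σ)| := le_abs_self _
      _ = |v ^ (1 - σ) - u ^ (1 - σ)| / |1 - σ| := abs_div _ _
      _ ≤ (u ^ (1 - σ) + v ^ (1 - σ)) / |1 - σ| := by
          gcongr
      _ ≤ 2 / |1 - σ| * ((v - u) * v⁻¹) * (u ^ (1 - σ) + v ^ (1 - σ)) := by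
          have h2 : (0:ℝ) < 2 / |1 - σ| := by positivity
          rw [div_eq_mul_inv, div_eq_mul_inv]
          nlinarith [mul_nonneg (mul_nonneg (le_of_lt h2) hS) (sub_nonneg.2 hhalf),
            inv_nonneg.2 h1σ'.le]
      _ ≤ max 2 (2 / |1 - σ|) * (v - u) * v⁻¹ * (u ^ (1 - σ) + v ^ (1 - σ)) := by
          have hnn : (0:ℝ) ≤ (v - u) * v⁻¹ * (u ^ (1 - σ) + v ^ (1 - σ)) := by
            have hvu : (0:ℝ) ≤ v - u := by linarith
            exact mul_nonneg (mul_nonneg hvu (inv_nonneg.2 hv0.le)) hS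
          nlinarith [le_max_right (2:ℝ) (2 / |1 - σ|)]

lemma intI {z u : ℝ} (hz : z ≠ 1) (hu : 1 ≤ u) :
    (∫ t in (1:ℝ)..u, t ^ (-z)) ≤ 2 / |1 - z| * u ^ max 0 (1 - z) := by
  have hu0 : (0:ℝ) < u := lt_of_lt_of_le one_pos hu
  have h1z : (0:ℝ) < |1 - z| := abs_pos.2 (sub_ne_zero.2 (Ne.symm hz))
  have hr : (-z : ℝ) ≠ -1 := by intro h; apply hz; linarith [neg_injective h]
  have h0m : (0:ℝ) ∉ Set.uIcc 1 u := Set.notMem_uIcc_of_lt one_pos hu0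
  have hJ := integral_rpow (a := (1:ℝ)) (b := u) (Or.inr ⟨hr, h0m⟩)
  have he : -z + 1 = 1 - z := by ring
  rw [he, Real.one_rpow] at hJ
  rw [hJ]
  have h1 : u ^ (1 - z) ≤ u ^ max 0 (1 - z) :=
    Real.rpow_le_rpow_of_exponent_le hu (le_max_right _ _)
  have h2 : (1:ℝ) ≤ u ^ max 0 (1 - z) := by
    have := Real.rpow_le_rpow_of_exponent_le hu (le_max_left 0 (1 - z))
    rwa [Real.rpow_zero] at this
  calc (u ^ (1 - z) - 1) / (1 - z) ≤ |(u ^ (1 - z) - 1) / (1 - z)| := le_abs_self _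
    _ = |u ^ (1 - z) - 1| / |1 - z| := abs_div _ _
    _ ≤ (u ^ (1 - z) + 1) / |1 - z| := by
        gcongr
        have := abs_sub (u ^ (1 - z)) (1:ℝ)
        rw [abs_of_nonneg (Real.rpow_nonneg hu0.le _), abs_one] at this
        linarith
    _ ≤ 2 / |1 - z| * u ^ max 0 (1 - z) := by
        rw [div_mul_eq_mul_div, div_le_div_iff₀ h1z h1z]
        nlinarith

/-- Pointwise bound for the solution `ψ(u,v) = ∫_1^u ∫_u^v F` of the 1+1 dimensional wave
equation `∂_u∂_vψ = F` with trivial data and source supported in `{1 ≤ u ≤ v}` satisfying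
`|F(u,v)| ≤ v^{-σ} u^{-z}`. The constant depends only on `σ` and `z`. -/
theorem stmt_4 (σ z : ℝ) (hσ : σ ≠ 1) (hz : z ≠ 1) :
    ∃ C : ℝ, ∀ F : ℝ → ℝ → ℝ,
      Continuous (fun p : ℝ × ℝ => F p.1 p.2) →
      (∀ u v : ℝ, ¬(1 ≤ u ∧ u ≤ v) → F u v = 0) →
      (∀ u v : ℝ, 1 ≤ u → u ≤ v → |F u v| ≤ v ^ (-σ) * u ^ (-z)) →
      ∀ u v : ℝ, 1 ≤ u → u ≤ v →
        |∫ u' in (1:ℝ)..u, ∫ v' in u..v, F u' v'| ≤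
          C * (v - u) * v⁻¹ * u ^ max 0 (1 - z) * (u ^ (1 - σ) + v ^ (1 - σ)) := by
  refine ⟨2 / |1 - z| * max 2 (2 / |1 - σ|), ?_⟩
  intro F hFc hF0 hFb u v hu huv
  have hu0 : (0:ℝ) < u := lt_of_lt_of_le one_pos hu
  have hv0 : (0:ℝ) < v := lt_of_lt_of_le hu0 huv
  set A : ℝ := ∫ t in u..v, t ^ (-σ) with hA
  have hA0 : 0 ≤ A := by
    apply intervalIntegral.integral_nonneg huv
    intro t ht
    exact Real.rpow_nonneg (le_trans hu0.le ht.1) _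
  set g : ℝ → ℝ := fun u' => ∫ v' in u..v, F u' v' with hgdef
  have hg_cont : Continuous g :=
    intervalIntegral.continuous_parametric_intervalIntegral_of_continuous' hFc u v
  -- bound |g x| for x ∈ [1,u]
  have hgb : ∀ x ∈ Set.Icc (1:ℝ) u, |g x| ≤ x ^ (-z) * A := by
    intro x hx
    have hFx : Continuous fun v' => F x v' := hFc.comp (Continuous.prodMk_right x)
    have s1 : |g x| ≤ ∫ v' in u..v, |F x v'| :=
      intervalIntegral.abs_integral_le_integral_abs huv
    have s2 : (∫ v' in u..v, |F x v'|) ≤ ∫ v' in u..v, v' ^ (-σ) * x ^ (-z) := by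
      apply intervalIntegral.integral_mono_on huv
        (hFx.abs.intervalIntegrable u v)
        ((rpowII hu0 huv).mul_const _)
      intro t ht
      exact hFb x t hx.1 (le_trans hx.2 ht.1)
    have s3 : (∫ v' in u..v, v' ^ (-σ) * x ^ (-z)) = A * x ^ (-z) := by
      rw [hA, ← intervalIntegral.integral_mul_const]
    rw [s3] at s2
    linarith [s1.trans s2]
  have step1 : |∫ u' in (1:ℝ)..u, g u'| ≤ ∫ u' in (1:ℝ)..u, |g u'| :=
    intervalIntegral.abs_integral_le_integral_abs hu
  have step2 : (∫ u' in (1:ℝ)..u, |g u'|) ≤ ∫ u' in (1:ℝ)..u, u' ^ (-z) * A :=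
    intervalIntegral.integral_mono_on hu (hg_cont.abs.intervalIntegrable 1 u)
      ((rpowII one_pos hu).mul_const _) hgb
  have step3 : (∫ u' in (1:ℝ)..u, u' ^ (-z) * A) = (∫ u' in (1:ℝ)..u, u' ^ (-z)) * A :=
    intervalIntegral.integral_mul_const _ _
  have hI0 : 0 ≤ ∫ u' in (1:ℝ)..u, u' ^ (-z) := by
    apply intervalIntegral.integral_nonneg hu
    intro t ht
    exact Real.rpow_nonneg (le_trans one_pos.le ht.1) _
  have hIb := intI hz hu
  have hAb := intA hσ hu huv
  have hfin : (∫ u' in (1:ℝ)..u, u' ^ (-z)) * A ≤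
      (2 / |1 - z| * u ^ max 0 (1 - z)) *
        (max 2 (2 / |1 - σ|) * (v - u) * v⁻¹ * (u ^ (1 - σ) + v ^ (1 - σ))) := by
    apply mul_le_mul hIb hAb hA0
    positivity
  calc |∫ u' in (1:ℝ)..u, g u'| ≤ ∫ u' in (1:ℝ)..u, |g u'| := step1
    _ ≤ (∫ u' in (1:ℝ)..u, u' ^ (-z)) * A := by rw [← step3]; exact step2
    _ ≤ (2 / |1 - z| * u ^ max 0 (1 - z)) *
        (max 2 (2 / |1 - σ|) * (v - u) * v⁻¹ * (u ^ (1 - σ) + v ^ (1 - σ))) := hfin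
    _ = 2 / |1 - z| * max 2 (2 / |1 - σ|) * (v - u) * v⁻¹ * u ^ max 0 (1 - z) *
        (u ^ (1 - σ) + v ^ (1 - σ)) := by ring
end

section
/- Let σ, z ∈ ℝ with σ ≠ 1 and z ≠ 1, and let F : ℝ² → ℝ be continuous with F(u,v) = 0 unless 1 ≤ u ≤ v and |F(u,v)| ≤ v^{−σ} u^{−z} for all 1 ≤ u ≤ v. Define P(u,v) = ∫_1^u F(u',v) du' and Q(u,v) = −∫_1^u F(u',u) du' + ∫_u^v F(u,v') dv' (these are the null derivatives ∂_vψ and ∂_uψ of ψ(u,v) = ∫_1^u ∫_u^v F dv' du'). Then there is a constant C depending only on σ and z such that, for all 1 ≤ u ≤ v, |P(u,v)| ≤ C · v^{−σ} · u^{max(0, 1−z)} and |Q(u,v)| ≤ C · u^{1 + max(0, 1−z)} · (u^{1−σ} + v^{1−σ}). -/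
open MeasureTheory intervalIntegral Real Set

/-- `|∫ f| ≤ ∫ g` for continuous `f` dominated on `[a,b]` by continuous `g`. -/
lemma abs_intervalIntegral_le' {f g : ℝ → ℝ} {a b : ℝ} (hab : a ≤ b)
    (hf : Continuous f) (hg : ContinuousOn g (Set.Icc a b))
    (h : ∀ x ∈ Set.Icc a b, |f x| ≤ g x) :
    |∫ x in a..b, f x| ≤ ∫ x in a..b, g x := by
  calc |∫ x in a..b, f x| ≤ ∫ x in a..b, |f x| := by
        simpa [Real.norm_eq_abs] using
          intervalIntegral.norm_integral_le_integral_norm (f := f) (a := a) (b := b)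
            (μ := MeasureTheory.volume) hab
    _ ≤ ∫ x in a..b, g x := by
        apply intervalIntegral.integral_mono_on hab
        · exact (hf.abs.continuousOn).intervalIntegrable_of_Icc hab
        · exact hg.intervalIntegrable_of_Icc hab
        · exact h

lemma aux_int1 {a u : ℝ} (ha : a ≠ 1) (hu : 1 ≤ u) :
    ∫ x in (1:ℝ)..u, x ^ (-a) ≤ (1/|1-a|) * u ^ max 0 (1-a) := by
  have hu0 : (0:ℝ) < u := lt_of_lt_of_le one_pos hu
  rw [integral_rpow (Or.inr ⟨fun h => ha (by linarith [neg_injective h]),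
    Set.notMem_uIcc_of_lt one_pos hu0⟩)]
  have e : -a + 1 = 1 - a := by ring
  rw [e, Real.one_rpow]
  rcases ha.lt_or_gt with hlt | hlt
  · -- a < 1
    have h1 : (0:ℝ) < 1 - a := by linarith
    rw [abs_of_pos h1, max_eq_right h1.le, div_le_iff₀ h1]
    have hnn : (0:ℝ) ≤ u ^ (1-a) := Real.rpow_nonneg hu0.le _
    have : 1/(1-a) * u ^ (1-a) * (1-a) = u ^ (1-a) := by field_simp
    rw [this]; linarith
  · -- 1 < a
    have h1 : (1:ℝ) - a < 0 := by linarith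
    have h2 : (0:ℝ) < a - 1 := by linarith
    rw [abs_of_neg h1, max_eq_left (by linarith), Real.rpow_zero,
      div_le_iff_of_neg h1]
    have hnn : (0:ℝ) ≤ u ^ (1-a) := Real.rpow_nonneg hu0.le _
    have : 1/(-(1-a)) * 1 * (1-a) = -1 := by field_simp
    rw [this]; linarith

lemma aux_int2 {b u v : ℝ} (hb : b ≠ 1) (hu : 1 ≤ u) (huv : u ≤ v) :
    ∫ x in u..v, x ^ (-b) ≤ (1/|1-b|) * (u ^ (1-b) + v ^ (1-b)) := by
  have hu0 : (0:ℝ) < u := lt_of_lt_of_le one_pos hu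
  have hv0 : (0:ℝ) < v := hu0.trans_le huv
  rw [integral_rpow (Or.inr ⟨fun h => hb (by linarith [neg_injective h]),
    Set.notMem_uIcc_of_lt hu0 hv0⟩)]
  have e : -b + 1 = 1 - b := by ring
  rw [e]
  have hnu : (0:ℝ) ≤ u ^ (1-b) := Real.rpow_nonneg hu0.le _
  have hnv : (0:ℝ) ≤ v ^ (1-b) := Real.rpow_nonneg hv0.le _
  rcases hb.lt_or_gt with hlt | hlt
  · have h1 : (0:ℝ) < 1 - b := by linarith
    rw [abs_of_pos h1, div_le_iff₀ h1]
    have : 1/(1-b) * (u ^ (1-b) + v ^ (1-b)) * (1-b) = u ^ (1-b) + v ^ (1-b) := by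
      field_simp
    rw [this]; linarith
  · have h1 : (1:ℝ) - b < 0 := by linarith
    rw [abs_of_neg h1, div_le_iff_of_neg h1]
    have : 1/(-(1-b)) * (u ^ (1-b) + v ^ (1-b)) * (1-b) = -(u ^ (1-b) + v ^ (1-b)) := by
      have hb1 : b - 1 ≠ 0 := by linarith
      field_simp
    rw [this]; linarith

/-- Pointwise bounds for the null derivatives
`∂_vψ(u,v) = ∫_1^u F(u',v) du'` and `∂_uψ(u,v) = -∫_1^u F(u',u) du' + ∫_u^v F(u,v') dv'`
of the solution of `∂_u∂_vψ = F` with trivial data, for a continuous source supported in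
`{1 ≤ u ≤ v}` with `|F(u,v)| ≤ v^{-σ} u^{-z}`. The constant depends only on `σ` and `z`. -/
theorem stmt_5 (σ z : ℝ) (hσ : σ ≠ 1) (hz : z ≠ 1) :
    ∃ C : ℝ, ∀ F : ℝ → ℝ → ℝ,
      Continuous (fun p : ℝ × ℝ => F p.1 p.2) →
      (∀ u v : ℝ, ¬(1 ≤ u ∧ u ≤ v) → F u v = 0) →
      (∀ u v : ℝ, 1 ≤ u → u ≤ v → |F u v| ≤ v ^ (-σ) * u ^ (-z)) →
      ∀ u v : ℝ, 1 ≤ u → u ≤ v →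
        |∫ u' in (1:ℝ)..u, F u' v| ≤ C * v ^ (-σ) * u ^ max 0 (1 - z) ∧
        |(-∫ u' in (1:ℝ)..u, F u' u) + ∫ v' in u..v, F u v'| ≤
          C * u ^ (1 + max 0 (1 - z)) * (u ^ (1 - σ) + v ^ (1 - σ)) := by
  refine ⟨1/|1-z| + 1/|1-σ|, fun F hF hsupp hbound u v hu huv => ?_⟩
  have hu0 : (0:ℝ) < u := lt_of_lt_of_le one_pos hu
  have hv1 : (1:ℝ) ≤ v := hu.trans huv
  have hv0 : (0:ℝ) < v := lt_of_lt_of_le one_pos hv1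
  have hMz : (0:ℝ) ≤ 1/|1-z| := by positivity
  have hMσ : (0:ℝ) ≤ 1/|1-σ| := by positivity
  -- key bound for integrals of the first kind
  have key1 : ∀ w : ℝ, u ≤ w →
      |∫ u' in (1:ℝ)..u, F u' w| ≤ (1/|1-z|) * w ^ (-σ) * u ^ max 0 (1-z) := by
    intro w hw
    have hw0 : (0:ℝ) < w := hu0.trans_le hw
    have hwσ : (0:ℝ) ≤ w ^ (-σ) := Real.rpow_nonneg hw0.le _
    have step : |∫ u' in (1:ℝ)..u, F u' w| ≤ ∫ u' in (1:ℝ)..u, w ^ (-σ) * u' ^ (-z) := by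
      apply abs_intervalIntegral_le' hu
      · exact hF.comp (continuous_id.prodMk continuous_const)
      · exact continuousOn_const.mul (continuousOn_id.rpow_const
          (fun x hx => Or.inl (ne_of_gt (lt_of_lt_of_le one_pos hx.1))))
      · intro x hx
        exact hbound x w hx.1 (hx.2.trans hw)
    calc |∫ u' in (1:ℝ)..u, F u' w| ≤ ∫ u' in (1:ℝ)..u, w ^ (-σ) * u' ^ (-z) := step
      _ = w ^ (-σ) * ∫ u' in (1:ℝ)..u, u' ^ (-z) := intervalIntegral.integral_const_mul _ _
      _ ≤ w ^ (-σ) * ((1/|1-z|) * u ^ max 0 (1-z)) :=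
          mul_le_mul_of_nonneg_left (aux_int1 hz hu) hwσ
      _ = (1/|1-z|) * w ^ (-σ) * u ^ max 0 (1-z) := by ring
  constructor
  · have h := key1 v huv
    have hx : (0:ℝ) ≤ v ^ (-σ) * u ^ max 0 (1-z) :=
      mul_nonneg (Real.rpow_nonneg hv0.le _) (Real.rpow_nonneg hu0.le _)
    nlinarith
  · -- second bound
    have hA := key1 u le_rfl
    have hB : |∫ v' in u..v, F u v'| ≤ u ^ (-z) * ((1/|1-σ|) * (u ^ (1-σ) + v ^ (1-σ))) := by
      have huz : (0:ℝ) ≤ u ^ (-z) := Real.rpow_nonneg hu0.le _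
      have step : |∫ v' in u..v, F u v'| ≤ ∫ v' in u..v, u ^ (-z) * v' ^ (-σ) := by
        apply abs_intervalIntegral_le' huv
        · exact hF.comp (continuous_const.prodMk continuous_id)
        · exact continuousOn_const.mul (continuousOn_id.rpow_const
            (fun x hx => Or.inl (ne_of_gt (lt_of_lt_of_le hu0 hx.1))))
        · intro x hx
          calc |F u x| ≤ x ^ (-σ) * u ^ (-z) := hbound u x hu (hu.trans hx.1 |>.trans le_rfl |> fun _ => hx.1) 
            _ = u ^ (-z) * x ^ (-σ) := by ring
      calc |∫ v' in u..v, F u v'| ≤ ∫ v' in u..v, u ^ (-z) * v' ^ (-σ) := step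
        _ = u ^ (-z) * ∫ v' in u..v, v' ^ (-σ) := intervalIntegral.integral_const_mul _ _
        _ ≤ u ^ (-z) * ((1/|1-σ|) * (u ^ (1-σ) + v ^ (1-σ))) :=
            mul_le_mul_of_nonneg_left (aux_int2 hσ hu huv) huz
    set M := max 0 (1-z) with hM
    have hMnn : (0:ℝ) ≤ M := le_max_left _ _
    have hnvσ : (0:ℝ) ≤ v ^ (1-σ) := Real.rpow_nonneg hv0.le _
    have hnuσ : (0:ℝ) ≤ u ^ (1-σ) := Real.rpow_nonneg hu0.le _
    have t1 : (1/|1-z|) * u ^ (-σ) * u ^ M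
        ≤ (1/|1-z|) * (u ^ (1+M) * (u ^ (1-σ) + v ^ (1-σ))) := by
      have e1 : u ^ (-σ) * u ^ M = u ^ (M-1) * u ^ (1-σ) := by
        rw [← Real.rpow_add hu0, ← Real.rpow_add hu0]; ring_nf
      rw [mul_assoc, e1]
      have h2 : u ^ (M-1) ≤ u ^ (1+M) :=
        Real.rpow_le_rpow_of_exponent_le hu (by linarith)
      have h3 : u ^ (M-1) * u ^ (1-σ) ≤ u ^ (1+M) * (u ^ (1-σ) + v ^ (1-σ)) := by
        apply mul_le_mul h2 (by linarith) hnuσ (Real.rpow_nonneg hu0.le _)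
      exact mul_le_mul_of_nonneg_left h3 hMz
    have t2 : u ^ (-z) * ((1/|1-σ|) * (u ^ (1-σ) + v ^ (1-σ)))
        ≤ (1/|1-σ|) * (u ^ (1+M) * (u ^ (1-σ) + v ^ (1-σ))) := by
      have h3 : u ^ (-z) ≤ u ^ (1+M) := by
        apply Real.rpow_le_rpow_of_exponent_le hu
        have := le_max_right (0:ℝ) (1-z); rw [← hM] at this; linarith
      calc u ^ (-z) * ((1/|1-σ|) * (u ^ (1-σ) + v ^ (1-σ)))
          = (1/|1-σ|) * (u ^ (-z) * (u ^ (1-σ) + v ^ (1-σ))) := by ring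
        _ ≤ (1/|1-σ|) * (u ^ (1+M) * (u ^ (1-σ) + v ^ (1-σ))) := by
            apply mul_le_mul_of_nonneg_left _ hMσ
            exact mul_le_mul_of_nonneg_right h3 (by linarith)
    calc |(-∫ u' in (1:ℝ)..u, F u' u) + ∫ v' in u..v, F u v'|
        ≤ |(-∫ u' in (1:ℝ)..u, F u' u)| + |∫ v' in u..v, F u v'| := abs_add_le _ _
      _ = |∫ u' in (1:ℝ)..u, F u' u| + |∫ v' in u..v, F u v'| := by rw [abs_neg]
      _ ≤ (1/|1-z|) * (u ^ (1+M) * (u ^ (1-σ) + v ^ (1-σ)))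
          + (1/|1-σ|) * (u ^ (1+M) * (u ^ (1-σ) + v ^ (1-σ))) :=
          add_le_add (hA.trans t1) (hB.trans t2)
      _ = (1/|1-z| + 1/|1-σ|) * u ^ (1+M) * (u ^ (1-σ) + v ^ (1-σ)) := by ring
end

section
/- Let σ, z ∈ ℝ with σ ≠ 1 and z ≠ 1. Let F : ℝ² → ℝ be continuous, continuously differentiable in its second variable, with F(u,v) = 0 unless 1 ≤ u ≤ v, and suppose |F(u,v)| ≤ v^{−σ} u^{−z} and |v · ∂_v F(u,v)| ≤ v^{−σ} u^{−z} for all 1 ≤ u ≤ v. Define T(u,v) = ∫_1^u (F(u',v) − F(u',u)) du' + ∫_u^v F(u,v') dv' (this is the time derivative ∂_tψ = ∂_uψ + ∂_vψ of ψ(u,v) = ∫_1^u ∫_u^v F dv' du'). Then there is a constant C depending only on σ and z such that |T(u,v)| ≤ C · (v − u) · v^{−1} · u^{1 + max(0, 1−z)} · (u^{1−σ} + v^{1−σ}) for all 1 ≤ u ≤ v. -/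
/-
Split `∂_tψ = I₁ + I₂` with `I₁ = ∫_1^u (F(u',v) - F(u',u)) du'` and `I₂ = ∫_u^v F(u,v') dv'`,
and treat the regimes `v ≤ 2u` and `v > 2u` separately. If `v ≤ 2u`, the mean value theorem
(for `I₁`) or the length of `[u, v]` (for `I₂`) yields the factor `(v - u)/u ≤ 2 (v - u)/v`.
If `v > 2u`, then `(v - u)/v ≥ 1/2`, so the triangle inequality for `I₁` and the exact integral
of the majorant `v'^{-σ}` for `I₂` suffice. Integrating in `u'` costs at most `u · u^{max(0,1-z)}`.
-/

open Real Set

theorem rpow_le_add_rpow_of_mem_Icc {a b s e : ℝ} (ha : 0 < a) (hs : s ∈ Icc a b) :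
    s ^ e ≤ a ^ e + b ^ e := by
  have hb : 0 < b := ha.trans_le (hs.1.trans hs.2)
  rcases le_or_gt e 0 with he | he
  · linarith [rpow_le_rpow_of_nonpos ha hs.1 he, rpow_nonneg hb.le e]
  · linarith [rpow_le_rpow (ha.le.trans hs.1) hs.2 he.le, rpow_nonneg ha.le e]

theorem integral_rpow_neg_le {σ u v : ℝ} (hσ : σ ≠ 1) (hu : 0 < u) (hv : 0 < v) :
    ∫ s in u..v, s ^ (-σ) ≤ (u ^ (1 - σ) + v ^ (1 - σ)) / |1 - σ| := by
  rw [integral_rpow (Or.inr ⟨by contrapose! hσ; linarith, notMem_uIcc_of_lt hu hv⟩),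
    neg_add_eq_sub]
  calc (v ^ (1 - σ) - u ^ (1 - σ)) / (1 - σ)
      ≤ |v ^ (1 - σ) - u ^ (1 - σ)| / |1 - σ| := abs_div _ (1 - σ) ▸ le_abs_self _
    _ ≤ (u ^ (1 - σ) + v ^ (1 - σ)) / |1 - σ| := by
      gcongr
      have := rpow_nonneg hu.le (1 - σ)
      have := rpow_nonneg hv.le (1 - σ)
      exact abs_sub_le_iff.2 ⟨by linarith, by linarith⟩

theorem abs_sub_le_of_abs_le_rpow_of_abs_mul_deriv_le {f : ℝ → ℝ} {σ A u v : ℝ} (hu : 0 < u)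
    (huv : u ≤ v) (hf : ∀ s ∈ Icc u v, DifferentiableAt ℝ f s)
    (hbound : ∀ s ∈ Icc u v, |f s| ≤ s ^ (-σ) * A)
    (hderiv : ∀ s ∈ Icc u v, |s * deriv f s| ≤ s ^ (-σ) * A) :
    |f v - f u| ≤ 2 * ((v - u) / v) * (u ^ (-σ) + v ^ (-σ)) * A := by
  have hv : 0 < v := hu.trans_le huv
  have hA : 0 ≤ A := nonneg_of_mul_nonneg_right
    ((abs_nonneg _).trans (hbound u ⟨le_rfl, huv⟩)) (rpow_pos_of_pos hu _)
  rcases le_or_gt v (2 * u) with hnear | hfar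
  · have hderiv' : ∀ s ∈ Icc u v, ‖deriv f s‖ ≤ (u ^ (-σ) + v ^ (-σ)) * A / u := by
      intro s hs
      rw [Real.norm_eq_abs, le_div_iff₀ hu]
      calc |deriv f s| * u ≤ |s * deriv f s| := by
            rw [abs_mul, abs_of_pos (hu.trans_le hs.1), mul_comm]
            gcongr
            exact hs.1
        _ ≤ s ^ (-σ) * A := hderiv s hs
        _ ≤ (u ^ (-σ) + v ^ (-σ)) * A := by gcongr; exact rpow_le_add_rpow_of_mem_Icc hu hs
    have hinv : 1 / u ≤ 2 / v := by rw [div_le_div_iff₀ hu hv]; linarith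
    calc |f v - f u| ≤ (u ^ (-σ) + v ^ (-σ)) * A / u * ‖v - u‖ :=
          (convex_Icc u v).norm_image_sub_le_of_norm_deriv_le hf hderiv' ⟨le_rfl, huv⟩
            ⟨huv, le_rfl⟩
      _ = (u ^ (-σ) + v ^ (-σ)) * A * (v - u) * (1 / u) := by
          rw [Real.norm_eq_abs, abs_of_nonneg (sub_nonneg.2 huv)]; ring
      _ ≤ (u ^ (-σ) + v ^ (-σ)) * A * (v - u) * (2 / v) := by gcongr
      _ = 2 * ((v - u) / v) * (u ^ (-σ) + v ^ (-σ)) * A := by ring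
  · calc |f v - f u| ≤ |f v| + |f u| := abs_sub _ _
      _ ≤ v ^ (-σ) * A + u ^ (-σ) * A :=
          add_le_add (hbound v ⟨huv, le_rfl⟩) (hbound u ⟨le_rfl, huv⟩)
      _ = 1 * (u ^ (-σ) + v ^ (-σ)) * A := by ring
      _ ≤ 2 * ((v - u) / v) * (u ^ (-σ) + v ^ (-σ)) * A := by
          gcongr
          rw [mul_div_assoc', le_div_iff₀ hv]
          linarith

theorem rpow_neg_add_rpow_neg_le_two_div_mul {σ u v : ℝ} (hu : 0 < u) (huv : u ≤ v)
    (hv2u : v ≤ 2 * u) :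
    u ^ (-σ) + v ^ (-σ) ≤ 2 / v * (u ^ (1 - σ) + v ^ (1 - σ)) := by
  have hv : 0 < v := hu.trans_le huv
  have hinv : 1 / u ≤ 2 / v := by rw [div_le_div_iff₀ hu hv]; linarith
  calc u ^ (-σ) + v ^ (-σ) = u ^ (1 - σ) * (1 / u) + v ^ (1 - σ) * (1 / v) := by
        rw [← sub_sub_cancel_left 1 σ, rpow_sub_one hu.ne', rpow_sub_one hv.ne']; ring
    _ ≤ u ^ (1 - σ) * (2 / v) + v ^ (1 - σ) * (2 / v) := by
        gcongr
        exact one_le_two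
    _ = 2 / v * (u ^ (1 - σ) + v ^ (1 - σ)) := by ring

theorem abs_intervalIntegral_le_of_abs_le_rpow {g : ℝ → ℝ} {σ A u v : ℝ} (hσ : σ ≠ 1)
    (hu : 0 < u) (huv : u ≤ v) (hg : ∀ s ∈ Icc u v, |g s| ≤ s ^ (-σ) * A) :
    |∫ s in u..v, g s| ≤
      (2 + 2 / |1 - σ|) * ((v - u) / v) * (u ^ (1 - σ) + v ^ (1 - σ)) * A := by
  have hv : 0 < v := hu.trans_le huv
  have hA : 0 ≤ A := nonneg_of_mul_nonneg_right
    ((abs_nonneg _).trans (hg u ⟨le_rfl, huv⟩)) (rpow_pos_of_pos hu _)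
  have hw : 0 ≤ (v - u) / v := div_nonneg (sub_nonneg.2 huv) hv.le
  set S := u ^ (1 - σ) + v ^ (1 - σ)
  have hS : 0 ≤ S := by positivity
  rcases le_or_gt v (2 * u) with hnear | hfar
  · have hσS := rpow_neg_add_rpow_neg_le_two_div_mul (σ := σ) hu huv hnear
    calc |∫ s in u..v, g s| ≤ (u ^ (-σ) + v ^ (-σ)) * A * |v - u| :=
          intervalIntegral.norm_integral_le_of_norm_le_const fun s hs => by
            have hs' : s ∈ Icc u v := Ioc_subset_Icc_self (uIoc_of_le huv ▸ hs)
            calc ‖g s‖ ≤ s ^ (-σ) * A := hg s hs'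
              _ ≤ (u ^ (-σ) + v ^ (-σ)) * A := by
                gcongr; exact rpow_le_add_rpow_of_mem_Icc hu hs'
      _ ≤ 2 / v * S * A * (v - u) := by
          rw [abs_of_nonneg (sub_nonneg.2 huv)]
          gcongr
      _ = 2 * ((v - u) / v) * S * A := by ring
      _ ≤ (2 + 2 / |1 - σ|) * ((v - u) / v) * S * A := by
          gcongr
          exact le_add_of_nonneg_right (by positivity)
  · calc ‖∫ s in u..v, g s‖ ≤ ∫ s in u..v, s ^ (-σ) * A :=
          intervalIntegral.norm_integral_le_of_norm_le huv
            (.of_forall fun s hs => hg s (Ioc_subset_Icc_self hs))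
            ((intervalIntegral.intervalIntegrable_rpow
              (Or.inr (notMem_uIcc_of_lt hu hv))).mul_const A)
      _ = (∫ s in u..v, s ^ (-σ)) * A := intervalIntegral.integral_mul_const _ _
      _ ≤ S / |1 - σ| * A := by gcongr; exact integral_rpow_neg_le hσ hu hv
      _ ≤ 2 * ((v - u) / v) * (S / |1 - σ|) * A := by
          gcongr
          refine le_mul_of_one_le_left (by positivity) ?_
          rw [mul_div_assoc', le_div_iff₀ hv]
          linarith
      _ ≤ (2 + 2 / |1 - σ|) * ((v - u) / v) * S * A := by
          rw [show 2 * ((v - u) / v) * (S / |1 - σ|) * A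
            = 2 / |1 - σ| * ((v - u) / v) * S * A by ring]
          gcongr
          linarith

theorem abs_integral_sub_le_of_abs_le_rpow {F : ℝ → ℝ → ℝ} {σ z u v : ℝ} (hu : 1 ≤ u)
    (huv : u ≤ v) (hFd : ∀ u', Differentiable ℝ (F u'))
    (hF : ∀ u' s, 1 ≤ u' → u' ≤ s → |F u' s| ≤ s ^ (-σ) * u' ^ (-z))
    (hdF : ∀ u' s, 1 ≤ u' → u' ≤ s → |s * deriv (F u') s| ≤ s ^ (-σ) * u' ^ (-z)) :
    |∫ u' in (1:ℝ)..u, (F u' v - F u' u)| ≤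
      2 * ((v - u) / v) * (u ^ (-σ) + v ^ (-σ)) * u ^ max 0 (1 - z) * (u - 1) := by
  have hv : 0 < v := by linarith
  have hw : 0 ≤ (v - u) / v := div_nonneg (sub_nonneg.2 huv) hv.le
  set w := (v - u) / v
  rw [← abs_of_nonneg (sub_nonneg.2 hu), ← Real.norm_eq_abs]
  refine intervalIntegral.norm_integral_le_of_norm_le_const fun u' hu' => ?_
  rw [uIoc_of_le hu] at hu'
  have hu'1 : 1 ≤ u' := hu'.1.le
  calc ‖F u' v - F u' u‖ ≤ 2 * w * (u ^ (-σ) + v ^ (-σ)) * u' ^ (-z) :=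
        abs_sub_le_of_abs_le_rpow_of_abs_mul_deriv_le (by linarith) huv
          (fun s _ => hFd u' s)
          (fun s hs => hF u' s hu'1 (hu'.2.trans hs.1))
          (fun s hs => hdF u' s hu'1 (hu'.2.trans hs.1))
    _ ≤ 2 * w * (u ^ (-σ) + v ^ (-σ)) * u ^ max 0 (1 - z) := by
        gcongr
        calc u' ^ (-z) ≤ u' ^ max 0 (1 - z) :=
              rpow_le_rpow_of_exponent_le hu'1 (by linarith [le_max_right 0 (1 - z)])
          _ ≤ u ^ max 0 (1 - z) := rpow_le_rpow (by linarith) hu'.2 (le_max_left _ _)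

theorem stmt_6_general (σ z : ℝ) (hσ : σ ≠ 1) :
    ∃ C : ℝ, ∀ F : ℝ → ℝ → ℝ,
      Continuous (fun p : ℝ × ℝ => F p.1 p.2) →
      (∀ u : ℝ, ContDiff ℝ 1 (fun v : ℝ => F u v)) →
      (∀ u v : ℝ, ¬(1 ≤ u ∧ u ≤ v) → F u v = 0) →
      (∀ u v : ℝ, 1 ≤ u → u ≤ v → |F u v| ≤ v ^ (-σ) * u ^ (-z)) →
      (∀ u v : ℝ, 1 ≤ u → u ≤ v → |v * deriv (fun v' : ℝ => F u v') v| ≤ v ^ (-σ) * u ^ (-z)) →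
      ∀ u v : ℝ, 1 ≤ u → u ≤ v →
        |(∫ u' in (1:ℝ)..u, (F u' v - F u' u)) + ∫ v' in u..v, F u v'| ≤
          C * (v - u) * v⁻¹ * u ^ (1 + max 0 (1 - z)) * (u ^ (1 - σ) + v ^ (1 - σ)) := by
  refine ⟨4 + 2 / |1 - σ|, fun F _ hFd _ hF hdF u v hu huv => ?_⟩
  have hu0 : 0 < u := by linarith
  have h₁ := abs_integral_sub_le_of_abs_le_rpow hu huv
    (fun u' => (hFd u').differentiable one_ne_zero) hF hdF
  have h₂ := abs_intervalIntegral_le_of_abs_le_rpow hσ hu0 huv fun s hs => hF u s hu hs.1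
  have hσ₁ : u ^ (-σ) + v ^ (-σ) ≤ u ^ (1 - σ) + v ^ (1 - σ) := by gcongr <;> linarith
  have hz₁ : u ^ max 0 (1 - z) * (u - 1) ≤ u ^ (1 + max 0 (1 - z)) := by
    rw [rpow_add hu0, rpow_one, mul_comm]
    gcongr
    linarith
  have hz₂ : u ^ (-z) ≤ u ^ (1 + max 0 (1 - z)) :=
    rpow_le_rpow_of_exponent_le hu (by linarith [le_max_right 0 (1 - z)])
  have hv0 : 0 < v := by linarith
  have hw : 0 ≤ (v - u) / v := div_nonneg (sub_nonneg.2 huv) hv0.le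
  have hS : 0 ≤ u ^ (1 - σ) + v ^ (1 - σ) := by positivity
  set w := (v - u) / v with hw_def
  set S := u ^ (1 - σ) + v ^ (1 - σ)
  calc _ ≤ |∫ u' in (1:ℝ)..u, (F u' v - F u' u)| + |∫ v' in u..v, F u v'| := abs_add_le _ _
    _ ≤ 2 * w * S * u ^ (1 + max 0 (1 - z))
        + (2 + 2 / |1 - σ|) * w * S * u ^ (1 + max 0 (1 - z)) := by
      refine add_le_add (h₁.trans ?_) (h₂.trans ?_)
      · rw [mul_assoc _ (u ^ max 0 (1 - z))]
        gcongr
      · gcongr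
    _ = _ := by rw [hw_def]; ring

/-- Pointwise bound for the time derivative
`∂_tψ(u,v) = ∫_1^u (F(u',v) - F(u',u)) du' + ∫_u^v F(u,v') dv'`
of the solution of `∂_u∂_vψ = F` with trivial data, for a continuous source supported in
`{1 ≤ u ≤ v}`, continuously differentiable in the second variable, with
`|F(u,v)| ≤ v^{-σ} u^{-z}` and `|v ∂_vF(u,v)| ≤ v^{-σ} u^{-z}`.
The constant depends only on `σ` and `z`. -/
theorem stmt_6 (σ z : ℝ) (hσ : σ ≠ 1) (hz : z ≠ 1) :
    ∃ C : ℝ, ∀ F : ℝ → ℝ → ℝ,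
      Continuous (fun p : ℝ × ℝ => F p.1 p.2) →
      (∀ u : ℝ, ContDiff ℝ 1 (fun v : ℝ => F u v)) →
      (∀ u v : ℝ, ¬(1 ≤ u ∧ u ≤ v) → F u v = 0) →
      (∀ u v : ℝ, 1 ≤ u → u ≤ v → |F u v| ≤ v ^ (-σ) * u ^ (-z)) →
      (∀ u v : ℝ, 1 ≤ u → u ≤ v → |v * deriv (fun v' : ℝ => F u v') v| ≤ v ^ (-σ) * u ^ (-z)) →
      ∀ u v : ℝ, 1 ≤ u → u ≤ v →
        |(∫ u' in (1:ℝ)..u, (F u' v - F u' u)) + ∫ v' in u..v, F u v'| ≤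
          C * (v - u) * v⁻¹ * u ^ (1 + max 0 (1 - z)) * (u ^ (1 - σ) + v ^ (1 - σ)) :=
  stmt_6_general σ z hσ
end

section
/- Let q > 1, c > 0, ε > 0 and u_0 > 0. Let F : [0,∞) × ℝ³ → ℝ be continuous, nonnegative and spherically symmetric, and let φ be a spherically symmetric C² solution of □φ = F on [0,∞) × ℝ³ with φ(0,·) = ∂_tφ(0,·) = 0. (i) If F(t,x) ≥ c · v^{−q} whenever u ∈ [u_0, u_0 + ε] (where u = (t−|x|)/2, v = (t+|x|)/2), then there exist u_1 and C > 0, depending only on ε, q, c, u_0, such that φ(t,x) ≥ C · t^{−1} · u^{1−q} at every point of [0,∞) × ℝ³ with u > u_1. (ii) If instead, for some s ∈ ℝ with s ≠ 1, F(t,x) ≥ c · v^{−q} · u^{−s} whenever u > u_0, then there exist u_1 and C > 0, depending only on q, c, s, u_0, such that φ(t,x) ≥ C · t^{−1} · u^{1−q+max(1−s,0)} at every point with u > u_1. -/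
/-!
For a radial solution put `g(t, r) = φ(t, r e₀)`. In the null coordinates `u = (t - r)/2`,
`v = (t + r)/2` the wave equation becomes `∂_u ∂_v (r g) = r F` off the axis. Integrating first
in `u` from the initial line `t = 0` (where the data vanish) and then in `v` from the axis gives
`r φ(t, x) = ∫_u^v ∫_{-v'}^u (v' - u') F(u' + v', (v' - u') e₀) du' dv'`, with a nonnegative
integrand. Keeping only a slab `u' ∈ [a, b]` with `2b ≤ u`, where `F ≳ v'^{-q}` and
`v' - u' ≥ v'/2`, leaves `r φ ≳ (b - a) ∫_u^v v'^{1-q} dv' ≳ (b - a) (r / t) u^{2-q}`, so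
`φ ≳ t⁻¹ u^{1-q}` once `u ≥ 1`; the axis `r = 0` follows by continuity. For (ii) with `s < 1` the
slab `[u/8, u/4]` has width `≈ u` and `u'^{-s} ≈ u^{-s}` on it, which produces the extra factor
`u^{1-s}`; for `s > 1` a fixed slab suffices.
-/

open Real Set MeasureTheory

noncomputable section

/-- Three-dimensional Euclidean space. -/
abbrev E3 : Type := EuclideanSpace ℝ (Fin 3)

/-- Partial derivative in time of a function of `(t, x)`. -/
def dtP (φ : ℝ → E3 → ℝ) : ℝ → E3 → ℝ := fun t x => deriv (fun s => φ s x) t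

/-- Partial derivative in the `i`-th spatial coordinate. -/
def pX (i : Fin 3) (f : E3 → ℝ) : E3 → ℝ :=
  fun x => deriv (fun h : ℝ => f (x + h • (EuclideanSpace.single i (1 : ℝ)))) 0

/-- Spatial Laplacian on `ℝ³`. -/
def lap3 (f : E3 → ℝ) : E3 → ℝ := fun x => ∑ i : Fin 3, pX i (pX i f) x

/-- The wave operator `□φ = ∂_t²φ - Δφ` on `ℝ^{1+3}`. -/
def box (φ : ℝ → E3 → ℝ) : ℝ → E3 → ℝ := fun t x => dtP (dtP φ) t x - lap3 (φ t) x

/-- A function on `ℝ³` is radial (spherically symmetric) if it depends only on `|x|`. -/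
def Radial (f : E3 → ℝ) : Prop := ∀ x y : E3, ‖x‖ = ‖y‖ → f x = f y

open Filter Topology

theorem hasDerivAt_fderiv_comp {V : Type*} [NormedAddCommGroup V] [NormedSpace ℝ V]
    {g : V → ℝ} (hg : ContDiff ℝ 2 g) {γ : ℝ → V} {γ' : V} {s : ℝ} (hγ : HasDerivAt γ γ' s)
    (w : V) : HasDerivAt (fun τ => fderiv ℝ g (γ τ) w) (fderiv ℝ (fderiv ℝ g) (γ s) γ' w) s :=
  (ContinuousLinearMap.apply ℝ ℝ w).hasFDerivAt.comp_hasDerivAt s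
    (((hg.fderiv_right (m := 1) le_rfl).differentiable one_ne_zero _).hasFDerivAt.comp_hasDerivAt
      s hγ)

section RadialLaplacian

theorem HasDerivAt.norm_of_ne_zero {V : Type*} [NormedAddCommGroup V] [InnerProductSpace ℝ V]
    {f : ℝ → V} {f' : V} {s : ℝ} (hf : HasDerivAt f f' s) (h0 : f s ≠ 0) :
    HasDerivAt (fun τ => ‖f τ‖) (Inner.inner ℝ (f s) f' / ‖f s‖) s := by
  have hsqrt := hf.norm_sq.sqrt (by positivity)
  simp only [Real.sqrt_sq (norm_nonneg _)] at hsqrt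
  convert hsqrt using 1
  field_simp

theorem hasDerivAt_norm_add_smul_single {x : E3} (hx : x ≠ 0) (i : Fin 3) :
    HasDerivAt (fun τ : ℝ => ‖x + τ • EuclideanSpace.single i (1 : ℝ)‖) (x i / ‖x‖) 0 := by
  have hline : HasDerivAt (fun τ : ℝ => x + τ • EuclideanSpace.single i (1 : ℝ))
      (EuclideanSpace.single i 1) 0 := by
    simpa using ((hasDerivAt_id (0 : ℝ)).smul_const (EuclideanSpace.single i (1 : ℝ))).const_add x
  convert hline.norm_of_ne_zero (by simpa using hx) using 2 <;>
    simp [EuclideanSpace.inner_single_right]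

variable {f : E3 → ℝ} {g g' g'' : ℝ → ℝ}

theorem pX_of_radial (hf : ∀ y, f y = g ‖y‖) (hg : ∀ ρ, HasDerivAt g (g' ρ) ρ)
    (i : Fin 3) {y : E3} (hy : y ≠ 0) :
    pX i f y = g' ‖y‖ * (y i / ‖y‖) := by
  simp only [pX, hf]
  exact ((hg ‖y‖).comp_of_eq 0 (hasDerivAt_norm_add_smul_single hy i) (by simp)).deriv

theorem pX_pX_of_radial (hf : ∀ y, f y = g ‖y‖) (hg : ∀ ρ, HasDerivAt g (g' ρ) ρ)
    (hg' : ∀ ρ, HasDerivAt g' (g'' ρ) ρ) (i : Fin 3) {x : E3} (hx : x ≠ 0) :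
    pX i (pX i f) x
      = g'' ‖x‖ * (x i / ‖x‖) ^ 2 + g' ‖x‖ * (‖x‖ ^ 2 - x i ^ 2) / ‖x‖ ^ 3 := by
  set e : E3 := EuclideanSpace.single i 1
  have hr : 0 < ‖x‖ := norm_pos_iff.2 hx
  have hne : ∀ᶠ s in 𝓝 (0 : ℝ), x + s • e ≠ 0 :=
    (Continuous.continuousAt (by fun_prop)).eventually_ne (by simpa using hx)
  have hpX : (fun s => pX i f (x + s • e)) =ᶠ[𝓝 0]
      fun s => g' ‖x + s • e‖ * ((x i + s) / ‖x + s • e‖) := by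
    filter_upwards [hne] with s hs
    rw [pX_of_radial hf hg i hs]
    simp [e]
  have hn := hasDerivAt_norm_add_smul_single hx i
  have hcoord : HasDerivAt (fun s : ℝ => x i + s) 1 0 := by
    simpa using (hasDerivAt_id (0 : ℝ)).const_add (x i)
  have hderiv : HasDerivAt (fun s => g' ‖x + s • e‖ * ((x i + s) / ‖x + s • e‖)) _ 0 :=
    ((hg' ‖x‖).comp_of_eq 0 hn (by simp)).mul
    (hcoord.div hn (by simpa [e] using hr.ne'))
  rw [pX, hpX.deriv_eq, hderiv.deriv]
  simp only [zero_smul, add_zero, Function.comp_apply]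
  field_simp

theorem sum_sq_apply_eq_norm_sq (x : E3) : x 0 ^ 2 + x 1 ^ 2 + x 2 ^ 2 = ‖x‖ ^ 2 := by
  simp [EuclideanSpace.norm_sq_eq, Fin.sum_univ_three]

theorem lap3_of_radial (hf : ∀ y, f y = g ‖y‖) (hg : ∀ ρ, HasDerivAt g (g' ρ) ρ)
    (hg' : ∀ ρ, HasDerivAt g' (g'' ρ) ρ) {x : E3} (hx : x ≠ 0) :
    lap3 f x = g'' ‖x‖ + 2 / ‖x‖ * g' ‖x‖ := by
  have hr : ‖x‖ ≠ 0 := norm_ne_zero_iff.2 hx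
  simp only [lap3, Fin.sum_univ_three, pX_pX_of_radial hf hg hg' _ hx]
  field_simp
  linear_combination (g'' ‖x‖ * ‖x‖ - g' ‖x‖) * sum_sq_apply_eq_norm_sq x

end RadialLaplacian

section RadialProfile

def e₀ : E3 := EuclideanSpace.single 0 1

theorem norm_smul_e₀ {r : ℝ} (hr : 0 ≤ r) : ‖r • e₀‖ = r := by
  simp [e₀, norm_smul, abs_of_nonneg hr]

def radialProfile (φ : ℝ → E3 → ℝ) : ℝ × ℝ → ℝ := fun p => φ p.1 (p.2 • e₀)

variable {φ : ℝ → E3 → ℝ}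

theorem contDiff_radialProfile {n : WithTop ℕ∞}
    (hφ : ContDiff ℝ n (fun p : ℝ × E3 => φ p.1 p.2)) :
    ContDiff ℝ n (radialProfile φ) :=
  hφ.comp (contDiff_fst.prodMk (contDiff_snd.smul contDiff_const))

theorem le_at_zero_of_le_smul_e₀ {ψ : E3 → ℝ} (hψ : Continuous ψ) {ρ : ℝ → ℝ}
    (hρ : ContinuousAt ρ 0) {δ₀ : ℝ} (hδ₀ : 0 < δ₀) (hle : ∀ δ ∈ Ioo 0 δ₀, ρ δ ≤ ψ (δ • e₀)) :
    ρ 0 ≤ ψ 0 := by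
  simpa using ContinuousWithinAt.closure_le (by rw [closure_Ioo hδ₀.ne]; exact ⟨le_rfl, hδ₀.le⟩)
    hρ.continuousWithinAt (hψ.comp (continuous_id.smul continuous_const)).continuousWithinAt hle

theorem apply_eq_radialProfile (hrad : ∀ t, Radial (φ t)) (t : ℝ) (y : E3) :
    φ t y = radialProfile φ (t, ‖y‖) :=
  hrad t y _ (norm_smul_e₀ (norm_nonneg y)).symm

theorem dtP_eq_fderiv_radialProfile (hφ : ContDiff ℝ 2 (fun p : ℝ × E3 => φ p.1 p.2))
    (hrad : ∀ t, Radial (φ t)) (t : ℝ) (x : E3) :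
    dtP φ t x = fderiv ℝ (radialProfile φ) (t, ‖x‖) (1, 0) := by
  simp only [dtP, apply_eq_radialProfile hrad _ x]
  exact (((contDiff_radialProfile hφ).differentiable two_ne_zero _).hasFDerivAt.comp_hasDerivAt t
    ((hasDerivAt_id t).prodMk (hasDerivAt_const t ‖x‖))).deriv

theorem dtP_dtP_eq_fderiv_fderiv_radialProfile
    (hφ : ContDiff ℝ 2 (fun p : ℝ × E3 => φ p.1 p.2)) (hrad : ∀ t, Radial (φ t))
    (t : ℝ) (x : E3) :
    dtP (dtP φ) t x = fderiv ℝ (fderiv ℝ (radialProfile φ)) (t, ‖x‖) (1, 0) (1, 0) := by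
  change deriv (fun s => dtP φ s x) t = _
  simp only [dtP_eq_fderiv_radialProfile hφ hrad]
  exact (hasDerivAt_fderiv_comp (contDiff_radialProfile hφ)
    ((hasDerivAt_id t).prodMk (hasDerivAt_const t ‖x‖)) _).deriv

theorem lap3_eq_radialProfile (hφ : ContDiff ℝ 2 (fun p : ℝ × E3 => φ p.1 p.2))
    (hrad : ∀ t, Radial (φ t)) (t : ℝ) {x : E3} (hx : x ≠ 0) :
    lap3 (φ t) x = fderiv ℝ (fderiv ℝ (radialProfile φ)) (t, ‖x‖) (0, 1) (0, 1)
      + 2 / ‖x‖ * fderiv ℝ (radialProfile φ) (t, ‖x‖) (0, 1) := by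
  have hg := contDiff_radialProfile hφ
  have hslice (ρ : ℝ) : HasDerivAt (fun ρ : ℝ => ((t, ρ) : ℝ × ℝ)) (0, 1) ρ :=
    (hasDerivAt_const ρ t).prodMk (hasDerivAt_id ρ)
  exact lap3_of_radial (apply_eq_radialProfile hrad t)
    (fun ρ => ((hg.differentiable two_ne_zero _).hasFDerivAt.comp_hasDerivAt ρ (hslice ρ)))
    (fun ρ => hasDerivAt_fderiv_comp hg (hslice ρ) _) hx

end RadialProfile

section NullCoordinates

variable {g : ℝ × ℝ → ℝ}

/-- `∂_v ((v - u) g(u + v, v - u))`: the `v`-derivative of `r g` in the null coordinates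
`t = u + v`, `r = v - u`. -/
def nullDeriv (g : ℝ × ℝ → ℝ) (u v : ℝ) : ℝ :=
  (v - u) * fderiv ℝ g (u + v, v - u) (1, 1) + g (u + v, v - u)

theorem hasDerivAt_sub_mul_null (hg : Differentiable ℝ g) (u v : ℝ) :
    HasDerivAt (fun v => (v - u) * g (u + v, v - u)) (nullDeriv g u v) v := by
  have hγ : HasDerivAt (fun v : ℝ => ((u + v, v - u) : ℝ × ℝ)) (1, 1) v :=
    ((hasDerivAt_id v).const_add u).prodMk ((hasDerivAt_id v).sub_const u)
  refine (((hasDerivAt_id v).sub_const u).mul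
    ((hg _).hasFDerivAt.comp_hasDerivAt v hγ)).congr_deriv ?_
  simp only [nullDeriv, id, Function.comp_apply]
  ring

theorem continuous_nullDeriv (hg : ContDiff ℝ 1 g) :
    Continuous (fun p : ℝ × ℝ => nullDeriv g p.1 p.2) := by
  have hDg := hg.continuous_fderiv one_ne_zero
  unfold nullDeriv
  fun_prop

theorem integral_nullDeriv (hg : ContDiff ℝ 1 g) (u v : ℝ) :
    ∫ w in u..v, nullDeriv g u w = (v - u) * g (u + v, v - u) := by
  rw [intervalIntegral.integral_eq_sub_of_hasDerivAt
    (fun w _ => hasDerivAt_sub_mul_null (hg.differentiable one_ne_zero) u w)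
    (((continuous_nullDeriv hg).uncurry_left u).intervalIntegrable u v)]
  ring

theorem hasDerivAt_nullDeriv (hg : ContDiff ℝ 2 g) (u v : ℝ) :
    HasDerivAt (fun u => nullDeriv g u v)
      ((v - u) * (fderiv ℝ (fderiv ℝ g) (u + v, v - u) (1, 0) (1, 0)
          - fderiv ℝ (fderiv ℝ g) (u + v, v - u) (0, 1) (0, 1))
        - 2 * fderiv ℝ g (u + v, v - u) (0, 1)) u := by
  have hγ : HasDerivAt (fun u : ℝ => ((u + v, v - u) : ℝ × ℝ)) (1, -1) u :=
    ((hasDerivAt_id u).add_const v).prodMk ((hasDerivAt_id u).const_sub v)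
  have hsymm := (hg.contDiffAt (x := (u + v, v - u))).isSymmSndFDerivAt (by simp)
  have h11 : ((1, 1) : ℝ × ℝ) = (1, 0) + (0, 1) := by simp
  have h1m : ((1, -1) : ℝ × ℝ) = (1, 0) - (0, 1) := by simp
  refine ((((hasDerivAt_id u).const_sub v).mul (hasDerivAt_fderiv_comp hg hγ (1, 1))).add
    ((hg.differentiable two_ne_zero _).hasFDerivAt.comp_hasDerivAt u hγ)).congr_deriv ?_
  simp only [h11, h1m, map_add, map_sub, sub_apply, hsymm (0, 1) (1, 0), id]
  ring

end NullCoordinates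

section Estimates

theorem sub_mul_le_intervalIntegral {w : ℝ → ℝ} {α a b β M : ℝ} (hαa : α ≤ a) (hab : a ≤ b)
    (hbβ : b ≤ β) (hw : ContinuousOn w (Icc α β)) (hw0 : ∀ z ∈ Icc α β, 0 ≤ w z)
    (hM : ∀ z ∈ Icc a b, M ≤ w z) :
    (b - a) * M ≤ ∫ z in α..β, w z :=
  calc (b - a) * M = ∫ _ in a..b, M := by simp
    _ ≤ ∫ z in a..b, w z := intervalIntegral.integral_mono_on hab intervalIntegrable_const
        ((hw.mono (Icc_subset_Icc hαa hbβ)).intervalIntegrable_of_Icc hab) hM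
    _ ≤ ∫ z in α..β, w z := intervalIntegral.integral_mono_interval hαa hab hbβ
        ((ae_restrict_mem measurableSet_Ioc).mono fun z hz => hw0 z (Ioc_subset_Icc_self hz))
        (hw.intervalIntegrable_of_Icc (hαa.trans (hab.trans hbβ)))

/-- Only the part `[u, min v (2u)]` of the interval is used, on which
`z ^ (1 - q) ≥ (2u) ^ (1 - q)`. -/
theorem mul_rpow_le_integral_rpow {q u v : ℝ} (hq : 1 ≤ q) (hu : 0 < u) (huv : u ≤ v) :
    u * (v - u) / (u + v) * (2 * u) ^ (1 - q) ≤ ∫ z in u..v, z ^ (1 - q) := by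
  have hw : u * (v - u) / (u + v) ≤ min v (2 * u) - u := by
    rw [div_le_iff₀ (by linarith)]
    rcases le_total v (2 * u) with h | h
    · rw [min_eq_left h]; nlinarith
    · rw [min_eq_right h]; nlinarith
  calc u * (v - u) / (u + v) * (2 * u) ^ (1 - q) ≤ (min v (2 * u) - u) * (2 * u) ^ (1 - q) := by
        gcongr
    _ ≤ ∫ z in u..v, z ^ (1 - q) :=
        sub_mul_le_intervalIntegral le_rfl (le_min huv (by linarith)) (min_le_left _ _)
          (continuousOn_id.rpow_const fun z hz => Or.inl (hu.trans_le hz.1).ne')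
          (fun z hz => rpow_nonneg (hu.le.trans hz.1) _)
          (fun z hz => rpow_le_rpow_of_nonpos (hu.trans_le hz.1)
            (hz.2.trans (min_le_right _ _)) (by linarith))

theorem mul_rpow_neg_le_rpow_neg {c U z : ℝ} (s : ℝ) (hc : 0 < c) (hU : 0 < U)
    (hcz : c * U ≤ z) (hzU : z ≤ U) :
    c ^ |s| * U ^ (-s) ≤ z ^ (-s) := by
  rcases le_total 0 s with hs | hs
  · have hc1 : c ≤ 1 := le_of_mul_le_mul_right (by linarith) hU
    calc c ^ |s| * U ^ (-s) ≤ 1 * U ^ (-s) := by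
          gcongr
          exact rpow_le_one hc.le hc1 (abs_nonneg s)
      _ ≤ z ^ (-s) := by
          rw [one_mul]
          exact rpow_le_rpow_of_nonpos ((mul_pos hc hU).trans_le hcz) hzU (by linarith)
  · rw [abs_of_nonpos hs, ← mul_rpow hc.le hU.le]
    exact rpow_le_rpow (by positivity) hcz (by linarith)

end Estimates

structure IsRadialWaveSolution (F φ : ℝ → E3 → ℝ) : Prop where
  continuousOn_source : ContinuousOn (fun p : ℝ × E3 => F p.1 p.2) (Ici 0 ×ˢ univ)
  contDiff : ContDiff ℝ 2 (fun p : ℝ × E3 => φ p.1 p.2)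
  radial : ∀ t, Radial (φ t)
  box_eq : ∀ t x, 0 ≤ t → box φ t x = F t x
  initial_value : ∀ x, φ 0 x = 0
  initial_velocity : ∀ x, dtP φ 0 x = 0

namespace IsRadialWaveSolution

variable {F φ : ℝ → E3 → ℝ}

theorem radialProfile_wave (h : IsRadialWaveSolution F φ) {t r : ℝ} (ht : 0 ≤ t) (hr : 0 < r) :
    fderiv ℝ (fderiv ℝ (radialProfile φ)) (t, r) (1, 0) (1, 0)
      - fderiv ℝ (fderiv ℝ (radialProfile φ)) (t, r) (0, 1) (0, 1)
      - 2 / r * fderiv ℝ (radialProfile φ) (t, r) (0, 1) = F t (r • e₀) := by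
  have hx : r • e₀ ≠ 0 := by
    rw [← norm_pos_iff, norm_smul_e₀ hr.le]
    exact hr
  have hbox := h.box_eq t (r • e₀) ht
  rw [box, dtP_dtP_eq_fderiv_fderiv_radialProfile h.contDiff h.radial,
    lap3_eq_radialProfile h.contDiff h.radial t hx, norm_smul_e₀ hr.le] at hbox
  linarith

theorem nullDeriv_neg_self (h : IsRadialWaveSolution F φ) (v : ℝ) :
    nullDeriv (radialProfile φ) (-v) v = 0 := by
  set g := radialProfile φ
  have hg := (contDiff_radialProfile h.contDiff).differentiable two_ne_zero
  have hdt : fderiv ℝ g (0, 2 * v) (1, 0) = 0 :=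
    ((hg _).hasFDerivAt.comp_hasDerivAt 0
      ((hasDerivAt_id' 0).prodMk (hasDerivAt_const 0 (2 * v)))).deriv.symm.trans
      (h.initial_velocity ((2 * v) • e₀))
  have hslice : (g ∘ fun ρ => ((0 : ℝ), ρ)) = fun _ => 0 :=
    funext fun ρ => h.initial_value _
  have hdr : fderiv ℝ g (0, 2 * v) (0, 1) = 0 := by
    have hd := (hg _).hasFDerivAt.comp_hasDerivAt (2 * v)
      ((hasDerivAt_const (2 * v) (0 : ℝ)).prodMk (hasDerivAt_id' (2 * v)))
    rw [hslice] at hd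
    exact hd.unique (hasDerivAt_const _ _)
  have h11 : ((1, 1) : ℝ × ℝ) = (1, 0) + (0, 1) := by simp
  have hpt : ((-v + v, v - -v) : ℝ × ℝ) = (0, 2 * v) := by ext <;> simp; ring
  simp only [nullDeriv, hpt, h11, map_add, hdt, hdr]
  simp [g, radialProfile, h.initial_value]

theorem continuousOn_duhamel_integrand (h : IsRadialWaveSolution F φ) (v : ℝ) :
    ContinuousOn (fun z => (v - z) * F (z + v) ((v - z) • e₀)) (Ici (-v)) := by
  refine (continuous_const.sub continuous_id).continuousOn.mul
    (h.continuousOn_source.comp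
      (Continuous.continuousOn (f := fun z : ℝ => ((z + v, (v - z) • e₀) : ℝ × E3))
        (by fun_prop)) ?_)
  intro z hz
  simp only [mem_prod, mem_Ici, mem_univ, and_true]
  linarith [mem_Ici.1 hz]

theorem nullDeriv_eq_integral (h : IsRadialWaveSolution F φ) {u v : ℝ} (hvu : -v ≤ u)
    (huv : u ≤ v) :
    nullDeriv (radialProfile φ) u v = ∫ z in -v..u, (v - z) * F (z + v) ((v - z) • e₀) := by
  have hg := contDiff_radialProfile h.contDiff
  have hderiv : ∀ z ∈ Ioo (-v) u, HasDerivWithinAt (fun z => nullDeriv (radialProfile φ) z v)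
      ((v - z) * F (z + v) ((v - z) • e₀)) (Ioi z) z := by
    intro z hz
    have hr : 0 < v - z := by linarith [hz.2]
    have hwave := h.radialProfile_wave (by linarith [hz.1] : 0 ≤ z + v) hr
    refine ((hasDerivAt_nullDeriv hg z v).congr_deriv ?_).hasDerivWithinAt
    rw [← hwave]
    field_simp
  rw [intervalIntegral.integral_eq_sub_of_hasDeriv_right_of_le hvu
    (((continuous_nullDeriv (hg.of_le one_le_two)).uncurry_right v).continuousOn) hderiv
    (((h.continuousOn_duhamel_integrand v).mono Icc_subset_Ici_self).intervalIntegrable_of_Icc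
      hvu), h.nullDeriv_neg_self, sub_zero]

theorem le_nullDeriv_of_slab_bound (h : IsRadialWaveSolution F φ)
    (hF0 : ∀ t x, 0 ≤ t → 0 ≤ F t x) {q K a b : ℝ} (hK : 0 ≤ K) (ha : 0 < a) (hab : a ≤ b)
    (hF : ∀ t x, 0 ≤ t → (t - ‖x‖) / 2 ∈ Icc a b → K * ((t + ‖x‖) / 2) ^ (-q) ≤ F t x)
    {u w : ℝ} (hbu : 2 * b ≤ u) (huw : u ≤ w) :
    (b - a) * (K / 2 * w ^ (1 - q)) ≤ nullDeriv (radialProfile φ) u w := by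
  have hw0 : 0 < w := by linarith
  rw [h.nullDeriv_eq_integral (by linarith) huw]
  refine sub_mul_le_intervalIntegral (by linarith) hab (by linarith)
    ((h.continuousOn_duhamel_integrand w).mono Icc_subset_Ici_self)
    (fun z hz => mul_nonneg (by linarith [hz.2]) (hF0 _ _ (by linarith [hz.1])))
    fun z hz => ?_
  have hwz : 0 ≤ w - z := by linarith [hz.2]
  have hFz := hF (z + w) ((w - z) • e₀) (by linarith [hz.1])
    (by rw [norm_smul_e₀ hwz]; convert hz using 1; ring)
  rw [norm_smul_e₀ hwz, show (z + w + (w - z)) / 2 = w by ring] at hFz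
  calc K / 2 * w ^ (1 - q) = w / 2 * (K * w ^ (-q)) := by
        rw [sub_eq_add_neg, rpow_add hw0, rpow_one]; ring
    _ ≤ (w - z) * F (z + w) ((w - z) • e₀) :=
        mul_le_mul (by linarith [hz.2]) hFz (by positivity) hwz

theorem le_of_slab_bound_of_ne_zero (h : IsRadialWaveSolution F φ)
    (hF0 : ∀ t x, 0 ≤ t → 0 ≤ F t x) {q K a b : ℝ} (hq : 1 ≤ q) (hK : 0 ≤ K) (ha : 0 < a)
    (hab : a ≤ b)
    (hF : ∀ t x, 0 ≤ t → (t - ‖x‖) / 2 ∈ Icc a b → K * ((t + ‖x‖) / 2) ^ (-q) ≤ F t x)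
    {t : ℝ} {x : E3} (hx : x ≠ 0) (hbu : 2 * b ≤ (t - ‖x‖) / 2) :
    (b - a) * K * 2 ^ (-q) * t⁻¹ * ((t - ‖x‖) / 2) ^ (2 - q) ≤ φ t x := by
  set r := ‖x‖
  set u := (t - r) / 2
  set v := (t + r) / 2
  set g := radialProfile φ
  have ht : t = u + v := by ring
  have hrv : r = v - u := by ring
  have hr : 0 < r := norm_pos_iff.2 hx
  have hu : 0 < u := by linarith
  have huv : u ≤ v := by linarith
  have hg := contDiff_radialProfile h.contDiff
  have hrep : r * φ t x = ∫ w in u..v, nullDeriv g u w := by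
    rw [integral_nullDeriv (hg.of_le one_le_two), ← ht, ← hrv, apply_eq_radialProfile h.radial]
  have houter : (b - a) * (K / 2) * ∫ w in u..v, w ^ (1 - q) ≤ ∫ w in u..v, nullDeriv g u w := by
    rw [← intervalIntegral.integral_const_mul]
    refine intervalIntegral.integral_mono_on huv ?_
      (((continuous_nullDeriv (hg.of_le one_le_two)).uncurry_left u).intervalIntegrable u v)
      fun w hw => by
        simpa only [mul_assoc] using h.le_nullDeriv_of_slab_bound hF0 hK ha hab hF hbu hw.1
    exact (continuousOn_const.mul (continuousOn_id.rpow_const fun z hz =>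
      Or.inl (hu.trans_le hz.1).ne')).intervalIntegrable_of_Icc huv
  have h2u : (2 * u) ^ (1 - q) = 2 * 2 ^ (-q) * u ^ (1 - q) := by
    rw [mul_rpow zero_le_two hu.le, sub_eq_add_neg, rpow_add two_pos, rpow_one]
  have hu2 : u ^ (2 - q) = u * u ^ (1 - q) := by
    rw [show 2 - q = 1 + (1 - q) by ring, rpow_add hu, rpow_one]
  refine le_of_mul_le_mul_left ?_ hr
  calc r * ((b - a) * K * 2 ^ (-q) * t⁻¹ * u ^ (2 - q))
      = (b - a) * (K / 2) * (u * (v - u) / (u + v) * (2 * u) ^ (1 - q)) := by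
        rw [h2u, hu2, ← ht, ← hrv]
        field_simp
    _ ≤ (b - a) * (K / 2) * ∫ w in u..v, w ^ (1 - q) :=
        mul_le_mul_of_nonneg_left (mul_rpow_le_integral_rpow hq hu huv)
          (mul_nonneg (sub_nonneg.2 hab) (by positivity))
    _ ≤ r * φ t x := hrep ▸ houter

theorem le_of_slab_bound (h : IsRadialWaveSolution F φ)
    (hF0 : ∀ t x, 0 ≤ t → 0 ≤ F t x) {q K a b : ℝ} (hq : 1 ≤ q) (hK : 0 ≤ K) (ha : 0 < a)
    (hab : a ≤ b)
    (hF : ∀ t x, 0 ≤ t → (t - ‖x‖) / 2 ∈ Icc a b → K * ((t + ‖x‖) / 2) ^ (-q) ≤ F t x)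
    {t : ℝ} {x : E3} (hbu : 2 * b < (t - ‖x‖) / 2) (hu : 1 < (t - ‖x‖) / 2) :
    (b - a) * K * 2 ^ (-q) * t⁻¹ * ((t - ‖x‖) / 2) ^ (1 - q) ≤ φ t x := by
  have hbound : ∀ y : E3, y ≠ 0 → 2 * b ≤ (t - ‖y‖) / 2 → 1 ≤ (t - ‖y‖) / 2 →
      (b - a) * K * 2 ^ (-q) * t⁻¹ * ((t - ‖y‖) / 2) ^ (1 - q) ≤ φ t y := by
    intro y hy hby h1y
    have hC : 0 ≤ (b - a) * K * 2 ^ (-q) * t⁻¹ := by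
      have : 0 < t := by linarith [norm_nonneg y]
      have : 0 ≤ b - a := sub_nonneg.2 hab
      positivity
    exact (mul_le_mul_of_nonneg_left (rpow_le_rpow_of_exponent_le h1y (by linarith)) hC).trans
      (h.le_of_slab_bound_of_ne_zero hF0 hq hK ha hab hF hy hby)
  rcases eq_or_ne x 0 with rfl | hx
  · rw [norm_zero] at hbu hu ⊢
    have hδ₀ : 0 < min (t - 4 * b) (t - 2) := lt_min (by linarith) (by linarith)
    have hρ : ContinuousAt (fun δ => (b - a) * K * 2 ^ (-q) * t⁻¹ * ((t - δ) / 2) ^ (1 - q)) 0 :=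
      continuousAt_const.mul (ContinuousAt.rpow_const (by fun_prop) (Or.inl (by linarith)))
    simpa using le_at_zero_of_le_smul_e₀
      (h.contDiff.continuous.comp (continuous_const.prodMk continuous_id)) hρ hδ₀ fun δ hδ => by
        have hnorm := norm_smul_e₀ hδ.1.le
        have := hbound (δ • e₀) (by rw [← norm_ne_zero_iff, hnorm]; exact hδ.1.ne')
          (by rw [hnorm]; linarith [hδ.2.trans_le (min_le_left _ _)])
          (by rw [hnorm]; linarith [hδ.2.trans_le (min_le_right _ _)])
        rwa [hnorm] at this
  · exact hbound x hx hbu.le hu.le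

theorem le_of_source_ge_mul_rpow (h : IsRadialWaveSolution F φ)
    (hF0 : ∀ t x, 0 ≤ t → 0 ≤ F t x) {q c s u₀ : ℝ} (hq : 1 ≤ q) (hc : 0 ≤ c)
    (hF : ∀ t x, 0 ≤ t → u₀ < (t - ‖x‖) / 2 →
      c * ((t + ‖x‖) / 2) ^ (-q) * ((t - ‖x‖) / 2) ^ (-s) ≤ F t x)
    {t : ℝ} {x : E3} (hu : max (8 * u₀) 1 < (t - ‖x‖) / 2) :
    c * 8⁻¹ ^ |s| / 8 * 2 ^ (-q) * t⁻¹ * ((t - ‖x‖) / 2) ^ (1 - q + (1 - s)) ≤ φ t x := by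
  set u := (t - ‖x‖) / 2
  obtain ⟨hu₀, hu1⟩ := max_lt_iff.1 hu
  have hu0 : 0 < u := by linarith
  have hslab := h.le_of_slab_bound hF0 hq (by positivity : 0 ≤ c * 8⁻¹ ^ |s| * u ^ (-s))
    (by positivity : 0 < u / 8) (by linarith : u / 8 ≤ u / 4) (fun t' x' ht' hz => by
      have hweight := mul_rpow_neg_le_rpow_neg (z := (t' - ‖x'‖) / 2) s
        (by norm_num : (0 : ℝ) < 8⁻¹) hu0
        (by linarith [hz.1]) (by linarith [hz.2])
      calc c * 8⁻¹ ^ |s| * u ^ (-s) * ((t' + ‖x'‖) / 2) ^ (-q)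
          = c * ((t' + ‖x'‖) / 2) ^ (-q) * (8⁻¹ ^ |s| * u ^ (-s)) := by ring
        _ ≤ F t' x' := by
          refine le_trans ?_ (hF t' x' ht' (by linarith [hz.1]))
          gcongr)
    (by linarith : 2 * (u / 4) < u) hu1
  convert hslab using 1
  rw [rpow_add hu0, sub_eq_add_neg 1 s, rpow_add hu0, rpow_one]
  ring

theorem le_of_source_ge_mul_rpow_of_nonneg (h : IsRadialWaveSolution F φ)
    (hF0 : ∀ t x, 0 ≤ t → 0 ≤ F t x) {q c s u₀ : ℝ} (hq : 1 ≤ q) (hc : 0 ≤ c) (hs : 0 ≤ s)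
    (hu₀ : 0 < u₀)
    (hF : ∀ t x, 0 ≤ t → u₀ < (t - ‖x‖) / 2 →
      c * ((t + ‖x‖) / 2) ^ (-q) * ((t - ‖x‖) / 2) ^ (-s) ≤ F t x)
    {t : ℝ} {x : E3} (hu : max (8 * u₀) 1 < (t - ‖x‖) / 2) :
    2 * u₀ * (c * (4 * u₀) ^ (-s)) * 2 ^ (-q) * t⁻¹ * ((t - ‖x‖) / 2) ^ (1 - q) ≤ φ t x := by
  obtain ⟨hu₀', hu1⟩ := max_lt_iff.1 hu
  have hslab := h.le_of_slab_bound hF0 hq (by positivity : 0 ≤ c * (4 * u₀) ^ (-s))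
    (by positivity : 0 < 2 * u₀) (by linarith : 2 * u₀ ≤ 4 * u₀) (fun t' x' ht' hz => by
      have hweight : (4 * u₀) ^ (-s) ≤ ((t' - ‖x'‖) / 2) ^ (-s) :=
        rpow_le_rpow_of_nonpos (by linarith [hz.1]) hz.2 (by linarith)
      calc c * (4 * u₀) ^ (-s) * ((t' + ‖x'‖) / 2) ^ (-q)
          = c * ((t' + ‖x'‖) / 2) ^ (-q) * (4 * u₀) ^ (-s) := by ring
        _ ≤ F t' x' := by
          refine le_trans ?_ (hF t' x' ht' (by linarith [hz.1]))
          gcongr)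
    (by linarith : 2 * (4 * u₀) < (t - ‖x‖) / 2) hu1
  convert hslab using 4
  ring

end IsRadialWaveSolution

/-- Lower bounds for solutions of `□φ = F` on `[0,∞) × ℝ³` with trivial data and a
nonnegative, continuous, spherically symmetric source `F` bounded below near null infinity:
(i) if `F ≥ c v^{-q}` on a slab `u ∈ [u₀, u₀+ε]` then `φ ≳ t⁻¹ u^{1-q}` for large `u`;
(ii) if `F ≥ c v^{-q} u^{-s}` for `u > u₀` then `φ ≳ t⁻¹ u^{1-q+max(1-s,0)}` for large `u`.
Here `u = (t-|x|)/2`, `v = (t+|x|)/2`, and the constants depend only on the parameters. -/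
theorem stmt_7 (q c ε u₀ : ℝ) (hq : 1 < q) (hc : 0 < c) (hε : 0 < ε) (hu₀ : 0 < u₀) :
    ((∃ u₁ C : ℝ, 0 < C ∧ ∀ F φ : ℝ → E3 → ℝ,
        ContinuousOn (fun p : ℝ × E3 => F p.1 p.2) (Set.Ici 0 ×ˢ Set.univ) →
        (∀ (t : ℝ) (x : E3), 0 ≤ t → 0 ≤ F t x) →
        (∀ t, Radial (F t)) →
        ContDiff ℝ 2 (fun p : ℝ × E3 => φ p.1 p.2) →
        (∀ t, Radial (φ t)) →
        (∀ (t : ℝ) (x : E3), 0 ≤ t → box φ t x = F t x) →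
        (∀ x : E3, φ 0 x = 0) → (∀ x : E3, dtP φ 0 x = 0) →
        (∀ (t : ℝ) (x : E3), 0 ≤ t → (t - ‖x‖) / 2 ∈ Set.Icc u₀ (u₀ + ε) →
          c * ((t + ‖x‖) / 2) ^ (-q) ≤ F t x) →
        ∀ (t : ℝ) (x : E3), 0 ≤ t → u₁ < (t - ‖x‖) / 2 →
          C * t⁻¹ * ((t - ‖x‖) / 2) ^ (1 - q) ≤ φ t x)) ∧
    (∀ s : ℝ, s ≠ 1 → ∃ u₁ C : ℝ, 0 < C ∧ ∀ F φ : ℝ → E3 → ℝ,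
        ContinuousOn (fun p : ℝ × E3 => F p.1 p.2) (Set.Ici 0 ×ˢ Set.univ) →
        (∀ (t : ℝ) (x : E3), 0 ≤ t → 0 ≤ F t x) →
        (∀ t, Radial (F t)) →
        ContDiff ℝ 2 (fun p : ℝ × E3 => φ p.1 p.2) →
        (∀ t, Radial (φ t)) →
        (∀ (t : ℝ) (x : E3), 0 ≤ t → box φ t x = F t x) →
        (∀ x : E3, φ 0 x = 0) → (∀ x : E3, dtP φ 0 x = 0) →
        (∀ (t : ℝ) (x : E3), 0 ≤ t → u₀ < (t - ‖x‖) / 2 →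
          c * ((t + ‖x‖) / 2) ^ (-q) * ((t - ‖x‖) / 2) ^ (-s) ≤ F t x) →
        ∀ (t : ℝ) (x : E3), 0 ≤ t → u₁ < (t - ‖x‖) / 2 →
          C * t⁻¹ * ((t - ‖x‖) / 2) ^ (1 - q + max (1 - s) 0) ≤ φ t x) := by
  refine ⟨⟨max (2 * (u₀ + ε)) 1, ε * c * 2 ^ (-q), by positivity, ?_⟩, fun s hs => ?_⟩
  · intro F φ hFc hF0 _ hφ hrad hbox hφ0 hφt0 hF t x _ hu
    obtain ⟨hbu, hu1⟩ := max_lt_iff.1 hu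
    simpa using (IsRadialWaveSolution.mk hFc hφ hrad hbox hφ0 hφt0).le_of_slab_bound hF0 hq.le
      hc.le hu₀ (by linarith) hF hbu hu1
  rcases hs.lt_or_gt with hs | hs
  · refine ⟨max (8 * u₀) 1, c * 8⁻¹ ^ |s| / 8 * 2 ^ (-q), by positivity, ?_⟩
    intro F φ hFc hF0 _ hφ hrad hbox hφ0 hφt0 hF t x _ hu
    rw [max_eq_left (by linarith : 0 ≤ 1 - s)]
    exact (IsRadialWaveSolution.mk hFc hφ hrad hbox hφ0 hφt0).le_of_source_ge_mul_rpow hF0 hq.le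
      hc.le hF hu
  · refine ⟨max (8 * u₀) 1, 2 * u₀ * (c * (4 * u₀) ^ (-s)) * 2 ^ (-q), by positivity, ?_⟩
    intro F φ hFc hF0 _ hφ hrad hbox hφ0 hφt0 hF t x _ hu
    rw [max_eq_right (by linarith : 1 - s ≤ 0), add_zero]
    exact (IsRadialWaveSolution.mk hFc hφ hrad hbox hφ0 hφt0).le_of_source_ge_mul_rpow_of_nonneg
      hF0 hq.le hc.le (by linarith) hu₀ hF hu

end
end
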